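/- arXiv:2605.03894 — 6 statements merged into one kernel-verified Lean document; each statement's English description precedes it below -/
import Mathlib

section
/- Let G be a path-connected graph and p : G̃ → G the tree covering of G (the graph lift of the topological universal cover of the realization G_R). If σ : I^n → G is a singular n-cube such that the image of every 2-dimensional face of σ is not a 3-cycle or a 4-cycle, then for every lift q̃ ∈ G̃ of σ(0) there is a unique graph map σ̃ : I^n → G̃ with p ∘ σ̃ = σ and σ̃(0) = q̃. -/
/-!
A covering lifts every edge, and every collapsed edge, uniquely once its source is lifted, so a
lift of a map on the connected cube is determined by one value. Lifts exist by induction on the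
dimension: lift the front face `x ↦ σ (0, x)`, then every vertical edge `σ (0, x) — σ (1, x)`.
The lifted vertical edges form a graph map on the back face because excluding 3- and 4-cycles
leaves only squares with a collapsed diagonal or with at most two points in their image. Such a
square is a composite of paths of two edges whose image backtracks or stalls, and the covering
lifts these to paths of two edges that backtrack or stall as well, so the lifted square closes.
-/

/-- The discrete `n`-cube graph on `{0,1}^n`: two vertices are adjacent iff they
differ in exactly one coordinate. -/
def Cube (n : ℕ) : SimpleGraph (Fin n → Bool) where
  Adj x y := ∃! i, x i ≠ y i
  symm := by
    constructor
    rintro x y ⟨i, hi, hu⟩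
    exact ⟨i, hi.symm, fun j hj => hu j hj.symm⟩
  loopless := by
    constructor
    rintro x ⟨i, hi, -⟩
    exact hi rfl

/-- A graph map sends each edge to an edge or to a vertex. -/
def IsGraphMap {V W : Type*} (G : SimpleGraph V) (H : SimpleGraph W) (f : V → W) : Prop :=
  ∀ ⦃u v⦄, G.Adj u v → H.Adj (f u) (f v) ∨ f u = f v

/-- The face of a singular cube obtained by fixing the `i`-th coordinate to `b`
(`b = false` gives the front face `f_i^-`, `b = true` the back face `f_i^+`). -/
def face {V : Type*} {n : ℕ} (i : Fin (n + 1)) (b : Bool)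
    (σ : (Fin (n + 1) → Bool) → V) : (Fin n → Bool) → V :=
  fun t => σ (i.insertNth b t)

/-- The reflection `T_i` of the discrete cube, flipping the `i`-th coordinate. -/
def reflT {n : ℕ} (i : Fin n) (t : Fin n → Bool) : Fin n → Bool :=
  Function.update t i (!t i)

/-- The transposition `T_{i,j}` of the discrete cube, swapping coordinates `i` and `j`. -/
def swapT {n : ℕ} (i j : Fin n) (t : Fin n → Bool) : Fin n → Bool :=
  t ∘ Equiv.swap i j

/-- A singular cube is degenerate iff it does not depend on some coordinate,
equivalently some pair of opposite faces `f_i^- σ = f_i^+ σ` agree. -/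
def IsDegenerate {V : Type*} {m : ℕ} (τ : (Fin m → Bool) → V) : Prop :=
  ∃ i : Fin m, ∀ t, τ t = τ (reflT i t)

/-- A combinatorial covering of graphs: `p` restricts to a bijection between the
neighbors of each vertex and the neighbors of its image (the graph lift of a
topological covering of the realizations). -/
def IsGraphCovering {V W : Type*} (T : SimpleGraph V) (G : SimpleGraph W) (p : V → W) : Prop :=
  ∀ v, Set.BijOn p (T.neighborSet v) (G.neighborSet (p v))

open Function Set

theorem Set.ncard_range_lt_of_not_injective {α β : Type*} [Finite α] {f : α → β}
    (hf : ¬ Injective f) : (range f).ncard < Nat.card α := by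
  rw [← image_univ, ← ncard_univ]
  exact (ncard_image_le (toFinite _)).lt_of_ne
    fun h => hf (injOn_univ.1 ((ncard_image_iff (toFinite _)).1 h))

theorem Set.eq_or_eq_or_eq_of_ncard_le_two {α : Type*} {s : Set α} (hs : s.Finite)
    (h : s.ncard ≤ 2) {x y z : α} (hx : x ∈ s) (hy : y ∈ s) (hz : z ∈ s) :
    x = y ∨ y = z ∨ x = z := by
  by_contra! hne
  obtain ⟨hxy, hyz, hxz⟩ := hne
  have h3 : ({x, y, z} : Set α).ncard = 3 := ncard_eq_three.2 ⟨x, y, z, hxy, hxz, hyz, rfl⟩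
  have := ncard_le_ncard (insert_subset hx (insert_subset hy (singleton_subset_iff.2 hz))) hs
  omega

namespace SimpleGraph

variable {V : Type*}

def AdjOrEq (G : SimpleGraph V) (x y : V) : Prop :=
  G.Adj x y ∨ x = y

variable {G : SimpleGraph V}

theorem AdjOrEq.refl (x : V) : G.AdjOrEq x x :=
  Or.inr rfl

theorem AdjOrEq.symm {x y : V} (h : G.AdjOrEq x y) : G.AdjOrEq y x :=
  h.imp (fun h => h.symm) Eq.symm

end SimpleGraph

namespace Cube

variable {n : ℕ} {X : Type*} {H : SimpleGraph X}

theorem adj_iff_card {x y : Fin n → Bool} :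
    (Cube n).Adj x y ↔ (Finset.univ.filter fun i => x i ≠ y i).card = 1 :=
  Fintype.existsUnique_iff_card_one _

theorem cons_adj_cons_iff {a b : Bool} {x y : Fin n → Bool} :
    (Cube (n + 1)).Adj (Fin.cons a x) (Fin.cons b y) ↔
      (a ≠ b ∧ x = y) ∨ (a = b ∧ (Cube n).Adj x y) := by
  by_cases h : a = b <;>
    simp [Cube, ExistsUnique, Fin.exists_fin_succ, Fin.forall_fin_succ, funext_iff, h,
      (Fin.succ_ne_zero _).symm]

theorem cons_adj_cons {x y : Fin n → Bool} (b : Bool) (h : (Cube n).Adj x y) :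
    (Cube (n + 1)).Adj (Fin.cons b x) (Fin.cons b y) :=
  cons_adj_cons_iff.2 (.inr ⟨rfl, h⟩)

theorem cons_false_adj_cons_true (x : Fin n → Bool) :
    (Cube (n + 1)).Adj (Fin.cons false x) (Fin.cons true x) :=
  cons_adj_cons_iff.2 (.inl ⟨Bool.false_ne_true, rfl⟩)

def consHom (n : ℕ) (b : Bool) : Cube n →g Cube (n + 1) :=
  ⟨fun x => Fin.cons b x, cons_adj_cons b⟩

theorem preconnected : ∀ n, (Cube n).Preconnected
  | 0, x, y => by rw [Subsingleton.elim x y]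
  | n + 1, x, y => by
    rw [← Fin.cons_self_tail x, ← Fin.cons_self_tail y]
    have htail :
        (Cube (n + 1)).Reachable (Fin.cons (x 0) (Fin.tail x)) (Fin.cons (x 0) (Fin.tail y)) :=
      (preconnected n _ _).map (consHom n (x 0))
    refine htail.trans ?_
    by_cases h : x 0 = y 0
    · rw [h]
    · exact (cons_adj_cons_iff.2 (.inl ⟨h, rfl⟩)).reachable

theorem exists_eq_update_of_adj {x y : Fin n → Bool} (h : (Cube n).Adj x y) :
    ∃ i, y = update x i (!x i) := by
  obtain ⟨i, hi, hu⟩ := h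
  refine ⟨i, funext fun j => ?_⟩
  by_cases hj : j = i
  · subst hj
    simpa using Bool.eq_not.2 (Ne.symm hi)
  · rw [update_of_ne hj]
    exact (not_not.1 (mt (hu j) hj)).symm

theorem update_false_adj_update_true (x : Fin n → Bool) (i : Fin n) :
    (Cube n).Adj (update x i false) (update x i true) :=
  ⟨i, by simp, fun j hj => by_contra fun hji => hj (by simp [update_of_ne hji])⟩

theorem isGraphMap_of_update {f : (Fin n → Bool) → X}
    (h : ∀ x i, H.AdjOrEq (f (update x i false)) (f (update x i true))) :
    IsGraphMap (Cube n) H f := by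
  intro x y hxy
  obtain ⟨i, rfl⟩ := exists_eq_update_of_adj hxy
  have hflip : ∀ b, H.AdjOrEq (f (update x i b)) (f (update x i !b)) := by
    intro b
    cases b
    exacts [h x i, (h x i).symm]
  have := hflip (x i)
  rwa [update_eq_self] at this

theorem isGraphMap_succ_iff {f : (Fin (n + 1) → Bool) → X} :
    IsGraphMap (Cube (n + 1)) H f ↔
      IsGraphMap (Cube n) H (fun x => f (Fin.cons false x)) ∧
        IsGraphMap (Cube n) H (fun x => f (Fin.cons true x)) ∧
        ∀ x, H.AdjOrEq (f (Fin.cons false x)) (f (Fin.cons true x)) := by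
  refine ⟨fun hf => ⟨fun x y h => hf (cons_adj_cons _ h), fun x y h => hf (cons_adj_cons _ h),
    fun x => hf (cons_false_adj_cons_true x)⟩, ?_⟩
  rintro ⟨h₀, h₁, hv⟩ u v huv
  induction u using Fin.consCases with | cons a x =>
  induction v using Fin.consCases with | cons b y =>
  rcases cons_adj_cons_iff.1 huv with ⟨hab, rfl⟩ | ⟨rfl, hxy⟩
  · cases a <;> cases b
    exacts [absurd rfl hab, hv x, (hv x).symm, absurd rfl hab]
  · cases a
    exacts [h₀ hxy, h₁ hxy]

def glue (f₀ f₁ : (Fin n → Bool) → X) (t : Fin (n + 1) → Bool) : X :=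
  bif t 0 then f₁ (Fin.tail t) else f₀ (Fin.tail t)

@[simp]
theorem glue_cons (f₀ f₁ : (Fin n → Bool) → X) (b : Bool) (x : Fin n → Bool) :
    glue f₀ f₁ (Fin.cons b x) = bif b then f₁ x else f₀ x := by
  simp [glue]

theorem ext_cons {f g : (Fin (n + 1) → Bool) → X}
    (h₀ : ∀ x, f (Fin.cons false x) = g (Fin.cons false x))
    (h₁ : ∀ x, f (Fin.cons true x) = g (Fin.cons true x)) :
    f = g := by
  funext t
  induction t using Fin.consCases with | cons b x =>
  cases b
  exacts [h₀ x, h₁ x]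

theorem antipodal_of_not_adj {s t : Fin 2 → Bool} (hne : s ≠ t) (hadj : ¬ (Cube 2).Adj s t) :
    (s = ![false, false] ∧ t = ![true, true]) ∨ (s = ![true, true] ∧ t = ![false, false]) ∨
    (s = ![false, true] ∧ t = ![true, false]) ∨ (s = ![true, false] ∧ t = ![false, true]) := by
  revert s t
  simp only [adj_iff_card]
  decide

end Cube

section Squares

variable {W : Type*}

def twoFace {n : ℕ} (σ : (Fin n → Bool) → W) (j k : Fin n) (c : Fin n → Bool) :
    (Fin 2 → Bool) → W :=
  fun s => σ fun m => if m = j then s 0 else if m = k then s 1 else c m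

theorem twoFace_cons {n : ℕ} (σ : (Fin (n + 1) → Bool) → W) (b : Bool) (j k : Fin n)
    (c : Fin n → Bool) :
    twoFace (fun x => σ (Fin.cons b x)) j k c = twoFace σ j.succ k.succ (Fin.cons b c) := by
  funext s
  refine congrArg σ (funext fun m => ?_)
  induction m using Fin.cases <;>
    simp [(Fin.succ_ne_zero _).symm]

theorem twoFace_zero_succ {n : ℕ} (σ : (Fin (n + 1) → Bool) → W) (i : Fin n)
    (c : Fin (n + 1) → Bool) (s : Fin 2 → Bool) :
    twoFace σ 0 i.succ c s = σ (Fin.cons (s 0) (update (Fin.tail c) i (s 1))) := by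
  refine congrArg σ (funext fun m => ?_)
  induction m using Fin.cases with
  | zero => simp
  | succ m => by_cases hm : m = i <;> simp [hm, Fin.succ_ne_zero, Fin.tail]

theorem range_eq_corners (τ : (Fin 2 → Bool) → W) :
    range τ = {τ ![false, false], τ ![false, true], τ ![true, false], τ ![true, true]} := by
  have huniv : (univ : Set (Fin 2 → Bool)) =
      {![false, false], ![false, true], ![true, false], ![true, true]} := by
    ext s
    simp only [mem_univ, mem_insert_iff, mem_singleton_iff, true_iff]
    revert s
    decide
  rw [← image_univ, huniv]
  simp only [image_insert_eq, image_singleton]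

def IsCollapsedSquare (τ : (Fin 2 → Bool) → W) : Prop :=
  τ ![false, false] = τ ![true, true] ∨ τ ![false, true] = τ ![true, false] ∨
    (range τ).ncard ≤ 2

theorem IsCollapsedSquare.of_not_injective {τ : (Fin 2 → Bool) → W} (hinj : ¬ Injective τ)
    (h3 : ¬ ((range τ).ncard = 3 ∧ ∃ s t, (Cube 2).Adj s t ∧ τ s = τ t)) :
    IsCollapsedSquare τ := by
  obtain ⟨s, t, hst, hne⟩ := not_injective_iff.1 hinj
  by_cases hadj : (Cube 2).Adj s t
  · have hlt : (range τ).ncard < 4 := by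
      simpa using ncard_range_lt_of_not_injective hinj
    have hne3 : (range τ).ncard ≠ 3 := fun h => h3 ⟨h, s, t, hadj, hst⟩
    exact .inr (.inr (by omega))
  · rcases Cube.antipodal_of_not_adj hne hadj with ⟨rfl, rfl⟩ | ⟨rfl, rfl⟩ | ⟨rfl, rfl⟩ | ⟨rfl, rfl⟩
    exacts [.inl hst, .inl hst.symm, .inr (.inl hst), .inr (.inl hst.symm)]

end Squares

namespace IsGraphCovering

variable {V W : Type*} {T : SimpleGraph V} {G : SimpleGraph W} {p : V → W}

theorem map_ne_of_adj (hp : IsGraphCovering T G p) {a b : V} (h : T.Adj a b) : p a ≠ p b :=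
  G.ne_of_adj ((hp a).mapsTo h)

theorem eq_of_adjOrEq (hp : IsGraphCovering T G p) {a b c : V} (hb : T.AdjOrEq a b)
    (hc : T.AdjOrEq a c) (h : p b = p c) : b = c := by
  rcases hb with hb | rfl <;> rcases hc with hc | rfl
  · exact (hp a).injOn hb hc h
  · exact absurd h.symm (hp.map_ne_of_adj hb)
  · exact absurd h (hp.map_ne_of_adj hc)
  · rfl

theorem exists_adjOrEq_lift (hp : IsGraphCovering T G p) (a : V) {w : W}
    (h : G.AdjOrEq (p a) w) : ∃ b, T.AdjOrEq a b ∧ p b = w := by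
  rcases h with h | rfl
  · obtain ⟨b, hb, rfl⟩ := (hp a).surjOn h
    exact ⟨b, .inl hb, rfl⟩
  · exact ⟨a, .refl a, rfl⟩

theorem adjOrEq_of_map_eq (hp : IsGraphCovering T G p) {x y z : V} (hxy : T.AdjOrEq x y)
    (hyz : T.AdjOrEq y z) (h : p x = p y ∨ p y = p z ∨ p x = p z) : T.AdjOrEq x z := by
  rcases h with h | h | h
  · rwa [hp.eq_of_adjOrEq (.refl x) hxy h]
  · rwa [← hp.eq_of_adjOrEq (.refl y) hyz h]
  · rw [hp.eq_of_adjOrEq hxy.symm hyz h]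
    exact .refl z

theorem adjOrEq_of_square (hp : IsGraphCovering T G p) {a b c d : V} (hab : T.AdjOrEq a b)
    (hac : T.AdjOrEq a c) (hbd : T.AdjOrEq b d)
    (h : p a = p d ∨ p b = p c ∨ ({p a, p b, p c, p d} : Set W).ncard ≤ 2) : T.AdjOrEq c d := by
  rcases h with h | h | h
  · exact hp.adjOrEq_of_map_eq hac.symm (hp.adjOrEq_of_map_eq hab hbd (.inr (.inr h)))
      (.inr (.inl h))
  · exact hp.adjOrEq_of_map_eq (hp.adjOrEq_of_map_eq hac.symm hab (.inr (.inr h.symm))) hbd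
      (.inl h.symm)
  · have hcb := hp.adjOrEq_of_map_eq hac.symm hab
      (eq_or_eq_or_eq_of_ncard_le_two (toFinite _) h (by simp) (by simp) (by simp))
    exact hp.adjOrEq_of_map_eq hcb hbd
      (eq_or_eq_or_eq_of_ncard_le_two (toFinite _) h (by simp) (by simp) (by simp))

theorem eq_of_isGraphMap_of_comp_eq (hp : IsGraphCovering T G p) {X : Type*}
    {H : SimpleGraph X} (hH : H.Preconnected) {f g : X → V} (hf : IsGraphMap H T f)
    (hg : IsGraphMap H T g) (hfg : p ∘ f = p ∘ g) {x₀ : X} (h₀ : f x₀ = g x₀) : f = g := by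
  funext x
  obtain ⟨w⟩ := hH x₀ x
  induction w with
  | nil => exact h₀
  | cons hadj _ ih =>
    exact ih (hp.eq_of_adjOrEq (hf hadj) (h₀ ▸ hg hadj) (congrFun hfg _))

theorem exists_lift_of_lift_front (hp : IsGraphCovering T G p) {n : ℕ}
    {σ : (Fin (n + 1) → Bool) → W} (hσ : IsGraphMap (Cube (n + 1)) G σ)
    (hfaces : ∀ (i : Fin n) c, IsCollapsedSquare (twoFace σ 0 i.succ c))
    {σt₀ : (Fin n → Bool) → V} (hσt₀ : IsGraphMap (Cube n) T σt₀)
    (hpσt₀ : ∀ y, p (σt₀ y) = σ (Fin.cons false y)) :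
    ∃ σt, IsGraphMap (Cube (n + 1)) T σt ∧ p ∘ σt = σ ∧ ∀ y, σt (Fin.cons false y) = σt₀ y := by
  obtain ⟨-, -, hσv⟩ := Cube.isGraphMap_succ_iff.1 hσ
  choose σt₁ hvert hpσt₁ using fun y => hp.exists_adjOrEq_lift (σt₀ y) ((hpσt₀ y).symm ▸ hσv y)
  have hσt₁ : IsGraphMap (Cube n) T σt₁ := Cube.isGraphMap_of_update fun y i => by
    have h := hfaces i (Fin.cons false y)
    simp only [IsCollapsedSquare, range_eq_corners, twoFace_zero_succ, Fin.tail_cons,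
      Matrix.cons_val_zero, Matrix.cons_val_one, ← hpσt₀, ← hpσt₁] at h
    exact hp.adjOrEq_of_square (hσt₀ (Cube.update_false_adj_update_true y i)) (hvert _) (hvert _) h
  refine ⟨Cube.glue σt₀ σt₁, Cube.isGraphMap_succ_iff.2 ⟨?_, ?_, ?_⟩, Cube.ext_cons ?_ ?_, ?_⟩ <;>
    simp [*]

theorem exists_lift_cube (hp : IsGraphCovering T G p) : ∀ {n : ℕ} {σ : (Fin n → Bool) → W},
    IsGraphMap (Cube n) G σ → (∀ j k, j ≠ k → ∀ c, IsCollapsedSquare (twoFace σ j k c)) →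
    ∀ {q : V}, p q = σ (fun _ => false) →
    ∃ σt, IsGraphMap (Cube n) T σt ∧ p ∘ σt = σ ∧ σt (fun _ => false) = q
  | 0, σ, _, _, q, hq =>
    ⟨fun _ => q, fun _ _ h => h.elim fun i _ => i.elim0,
      funext fun t => by rw [Subsingleton.elim t (fun _ => false)]; exact hq, rfl⟩
  | n + 1, σ, hσ, hfaces, q, hq => by
    have hzero : (Fin.cons false fun _ => false : Fin (n + 1) → Bool) = fun _ => false :=
      Fin.cons_self_tail (fun _ => false)
    obtain ⟨σt₀, hσt₀, hpσt₀, hq₀⟩ := exists_lift_cube hp (Cube.isGraphMap_succ_iff.1 hσ).1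
      (fun j k hjk c => twoFace_cons σ false j k c ▸ hfaces _ _ (by simpa using hjk) _)
      (q := q) (by rw [hq, hzero])
    obtain ⟨σt, hσt, hpσt, hσt_front⟩ := hp.exists_lift_of_lift_front hσ
      (fun i => hfaces 0 i.succ (Fin.succ_ne_zero i).symm) hσt₀ (congrFun hpσt₀)
    exact ⟨σt, hσt, hpσt, by rw [← hzero, hσt_front, hq₀]⟩

end IsGraphCovering

theorem unique_lift_of_no_small_cycles_general {V W : Type*}
    (G : SimpleGraph W) (T : SimpleGraph V) (p : V → W)
    (hp : IsGraphCovering T G p)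
    {n : ℕ} (σ : (Fin n → Bool) → W) (hσ : IsGraphMap (Cube n) G σ)
    (hfaces : ∀ (j k : Fin n), j ≠ k → ∀ c : Fin n → Bool,
      -- `τ` is the 2-dimensional face of `σ` at coordinates `j, k`, with the other
      -- coordinates fixed according to `c`
      ∀ τ : (Fin 2 → Bool) → W,
        (τ = fun s => σ fun m => if m = j then s 0 else if m = k then s 1 else c m) →
        -- the image of `τ` is not a 4-cycle:
        ¬ Function.Injective τ ∧
        -- the image of `τ` is not a 3-cycle:
        ¬ ((Set.range τ).ncard = 3 ∧ ∃ s t, (Cube 2).Adj s t ∧ τ s = τ t))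
    (q : V) (hq : p q = σ (fun _ => false)) :
    ∃! σt : (Fin n → Bool) → V,
      IsGraphMap (Cube n) T σt ∧ p ∘ σt = σ ∧ σt (fun _ => false) = q := by
  have hcollapsed : ∀ j k, j ≠ k → ∀ c, IsCollapsedSquare (twoFace σ j k c) := fun j k hjk c =>
    IsCollapsedSquare.of_not_injective (hfaces j k hjk c _ rfl).1 (hfaces j k hjk c _ rfl).2
  obtain ⟨σt, hσt, hpσt, hσtq⟩ := hp.exists_lift_cube hσ hcollapsed hq
  refine ⟨σt, ⟨hσt, hpσt, hσtq⟩, fun σt' ⟨hσt', hpσt', hσt'q⟩ => ?_⟩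
  exact hp.eq_of_isGraphMap_of_comp_eq (Cube.preconnected n) hσt' hσt (hpσt'.trans hpσt.symm)
    (hσt'q.trans hσtq.symm)

/-- let `G` be a path-connected graph and `p : T → G` its tree covering.
If `σ : I^n → G` is a singular cube such that the image of each of its 2-dimensional
faces is neither a 3-cycle nor a 4-cycle, then for every lift `q` of `σ(0)` there is
a unique lift `σ̃ : I^n → T` of `σ` with `σ̃(0) = q`. -/
theorem unique_lift_of_no_small_cycles {V W : Type*}
    (G : SimpleGraph W) (T : SimpleGraph V) (p : V → W)
    (hG : G.Connected) (hT : T.IsTree) (hp : IsGraphCovering T G p)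
    {n : ℕ} (σ : (Fin n → Bool) → W) (hσ : IsGraphMap (Cube n) G σ)
    (hfaces : ∀ (j k : Fin n), j ≠ k → ∀ c : Fin n → Bool,
      -- `τ` is the 2-dimensional face of `σ` at coordinates `j, k`, with the other
      -- coordinates fixed according to `c`
      ∀ τ : (Fin 2 → Bool) → W,
        (τ = fun s => σ fun m => if m = j then s 0 else if m = k then s 1 else c m) →
        -- the image of `τ` is not a 4-cycle:
        ¬ Function.Injective τ ∧
        -- the image of `τ` is not a 3-cycle:
        ¬ ((Set.range τ).ncard = 3 ∧ ∃ s t, (Cube 2).Adj s t ∧ τ s = τ t))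
    (q : V) (hq : p q = σ (fun _ => false)) :
    ∃! σt : (Fin n → Bool) → V,
      IsGraphMap (Cube n) T σt ∧ p ∘ σt = σ ∧ σt (fun _ => false) = q :=
  unique_lift_of_no_small_cycles_general G T p hp σ hσ hfaces q hq
end

section
/- Let σ : I^n → G be a singular n-cube and 1 ≤ i ≤ n. Define the singular (n+1)-cube ρ : I^{n+1} → G by ρ(t_1,…,t_{n+1}) = σ(t_1,…,t_{i-1}, t_{i+1},…,t_{n+1}) if t_i = 0, and ρ(t_1,…,t_{n+1}) = σ(t_1,…,t_{i-1}, 0, t_{i+2},…,t_{n+1}) if t_i = 1. Then ρ is a graph map, f_i^- ρ = σ, f_{i+1}^+ ρ = σ ∘ T_i, the faces f_i^+ ρ and f_{i+1}^- ρ are degenerate, and every other face f_j^± ρ (j ∉ {i, i+1}) is not injective. -/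
/-!
The prism factors as `ρ = σ ∘ π` through the cube map `π = prismMap i : I^{n+2} → I^{n+1}`
that deletes coordinate `i` and replaces coordinate `i + 1` by `t_{i+1} ∧ ¬ t_i`. Flipping one
coordinate of `t` changes at most one coordinate of `π t`, so `π`, and hence `ρ`, is a graph
map. The faces of `ρ` are `σ` composed with the faces of `π`, and these are computed directly:
the identity, `T_i`, or (twice) a map that forgets coordinate `i`. On the half `t_i = 1`, `π`
forgets `t_{i+1}`; every other face still sees both of these coordinates, so it identifies two
vertices.
-/

open Function

lemma IsGraphMap.comp {U V W : Type*} {F : SimpleGraph U} {G : SimpleGraph V}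
    {H : SimpleGraph W} {f : U → V} {g : V → W} (hg : IsGraphMap G H g) (hf : IsGraphMap F G f) :
    IsGraphMap F H (g ∘ f) := by
  intro u v huv
  rcases hf huv with h | h
  · exact hg h
  · exact Or.inr (congrArg g h)

lemma cube_adj_update_or_eq {m : ℕ} (t : Fin m → Bool) (k : Fin m) (c : Bool) :
    (Cube m).Adj t (update t k c) ∨ t = update t k c := by
  by_cases h : t k = c
  · exact Or.inr (by rw [← h, update_eq_self])
  · refine Or.inl ⟨k, by simpa using h, fun l hl => ?_⟩
    by_contra hlk
    simp [update_of_ne hlk] at hl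

lemma exists_eq_reflT_of_cube_adj {m : ℕ} {t t' : Fin m → Bool} (h : (Cube m).Adj t t') :
    ∃ j, t' = reflT j t := by
  obtain ⟨j, hj, hu⟩ := h
  refine ⟨j, funext fun l => ?_⟩
  rcases eq_or_ne l j with rfl | hl
  · simp [reflT, Bool.eq_not_of_ne (Ne.symm hj)]
  · rw [reflT, update_of_ne hl]
    by_contra h
    exact hl (hu l (Ne.symm h))

lemma isGraphMap_cube_of_reflT {m m' : ℕ} {f : (Fin m → Bool) → (Fin m' → Bool)}
    (hf : ∀ t j, ∃ k c, f (reflT j t) = update (f t) k c) : IsGraphMap (Cube m) (Cube m') f := by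
  intro t t' h
  obtain ⟨j, rfl⟩ := exists_eq_reflT_of_cube_adj h
  obtain ⟨k, c, hkc⟩ := hf t j
  rw [hkc]
  exact cube_adj_update_or_eq (f t) k c

lemma insertNth_reflT {n : ℕ} (j : Fin (n + 1)) (b : Bool) (t : Fin n → Bool) (k : Fin n) :
    j.insertNth b (reflT k t) = reflT (j.succAbove k) (j.insertNth b t) := by
  simp [reflT]

lemma face_comp {U V : Type*} {n : ℕ} (j : Fin (n + 1)) (b : Bool) (g : U → V)
    (f : (Fin (n + 1) → Bool) → U) : face j b (g ∘ f) = g ∘ face j b f :=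
  rfl

lemma isDegenerate_comp_update {V : Type*} {m : ℕ} (τ : (Fin m → Bool) → V) (i : Fin m)
    (b : Bool) : IsDegenerate (τ ∘ fun t => update t i b) :=
  ⟨i, fun t => by simp [reflT]⟩

lemma not_injective_face_of_reflT_invariant {V : Type*} {n : ℕ}
    {τ : (Fin (n + 1) → Bool) → V} {a p j : Fin (n + 1)} (hja : j ≠ a) (hjp : j ≠ p)
    (hτ : ∀ t, t p = true → τ (reflT a t) = τ t) (b : Bool) : ¬ Injective (face j b τ) := by
  obtain ⟨k, rfl⟩ := Fin.exists_succAbove_eq hja.symm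
  obtain ⟨q, rfl⟩ := Fin.exists_succAbove_eq hjp.symm
  set t : Fin n → Bool := fun _ => true
  have hflip : reflT k t ≠ t := fun h => by simpa [t, reflT] using congrFun h k
  refine fun hinj => hflip (hinj ?_)
  simp only [face, insertNth_reflT]
  exact hτ _ (by simp [t])

section Prism

variable {n : ℕ} (i : Fin (n + 1))

def prismMap (t : Fin (n + 2) → Bool) : Fin (n + 1) → Bool :=
  update (t ∘ i.castSucc.succAbove) i (t i.succ && !t i.castSucc)

lemma prism_eq_comp {V : Type*} {σ : (Fin (n + 1) → Bool) → V} {ρ : (Fin (n + 2) → Bool) → V}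
    (hρ : ∀ t, ρ t =
      if t i.castSucc = false then σ (t ∘ i.castSucc.succAbove)
      else σ (update (t ∘ i.castSucc.succAbove) i false)) :
    ρ = σ ∘ prismMap i := by
  funext t
  have hi : (t ∘ i.castSucc.succAbove) i = t i.succ := by simp
  rw [hρ, comp_apply, prismMap]
  cases t i.castSucc
  · rw [if_pos rfl, Bool.not_false, Bool.and_true, ← hi, update_eq_self]
  · simp

@[simp]
lemma castSucc_insertNth_apply_succ (b : Bool) (t : Fin (n + 1) → Bool) :
    Fin.insertNth (α := fun _ => Bool) i.castSucc b t i.succ = t i := by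
  rw [← Fin.succAbove_castSucc_self, Fin.insertNth_apply_succAbove]

@[simp]
lemma succ_insertNth_apply_castSucc (b : Bool) (t : Fin (n + 1) → Bool) :
    Fin.insertNth (α := fun _ => Bool) i.succ b t i.castSucc = t i := by
  rw [← Fin.succAbove_succ_self, Fin.insertNth_apply_succAbove]

lemma succAbove_castSucc_eq_succAbove_succ {k : Fin (n + 1)} (hk : k ≠ i) :
    i.castSucc.succAbove k = i.succ.succAbove k := by
  rcases hk.lt_or_gt with h | h
  · rw [Fin.succAbove_castSucc_of_lt _ _ h, Fin.succAbove_succ_of_le _ _ h.le]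
  · rw [Fin.succAbove_castSucc_of_le _ _ h.le, Fin.succAbove_succ_of_lt _ _ h]

lemma succ_insertNth_comp_castSucc_succAbove (b : Bool) (t : Fin (n + 1) → Bool) :
    i.succ.insertNth b t ∘ i.castSucc.succAbove = update t i b := by
  funext k
  rcases eq_or_ne k i with rfl | hk
  · simp
  · rw [comp_apply, succAbove_castSucc_eq_succAbove_succ i hk, Fin.insertNth_apply_succAbove,
      update_of_ne hk]

lemma face_castSucc_false_prismMap : face i.castSucc false (prismMap i) = id :=
  funext fun t => by simp [face, prismMap]

lemma face_castSucc_true_prismMap :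
    face i.castSucc true (prismMap i) = fun t => update t i false :=
  funext fun t => by simp [face, prismMap]

lemma face_succ_true_prismMap : face i.succ true (prismMap i) = reflT i :=
  funext fun t => by simp [face, prismMap, reflT, succ_insertNth_comp_castSucc_succAbove]

lemma face_succ_false_prismMap :
    face i.succ false (prismMap i) = fun t => update t i false :=
  funext fun t => by simp [face, prismMap, succ_insertNth_comp_castSucc_succAbove]

lemma prismMap_update_castSucc (t : Fin (n + 2) → Bool) (c : Bool) :
    prismMap i (update t i.castSucc c) = update (prismMap i t) i (t i.succ && !c) := by
  have hs : update t i.castSucc c ∘ i.castSucc.succAbove = t ∘ i.castSucc.succAbove :=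
    funext fun k => update_of_ne (Fin.succAbove_ne _ k) _ _
  rw [prismMap, prismMap, hs, update_of_ne Fin.castSucc_lt_succ.ne', update_self,
    update_idem]

lemma prismMap_update_succ (t : Fin (n + 2) → Bool) (c : Bool) :
    prismMap i (update t i.succ c) = update (prismMap i t) i (c && !t i.castSucc) := by
  have hs : update t i.succ c ∘ i.castSucc.succAbove = update (t ∘ i.castSucc.succAbove) i c := by
    rw [← Fin.succAbove_castSucc_self, update_comp_eq_of_injective _ Fin.succAbove_right_injective]
  rw [prismMap, prismMap, hs, update_of_ne Fin.castSucc_lt_succ.ne, update_self]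
  simp only [update_idem]

lemma prismMap_update_succAbove (t : Fin (n + 2) → Bool) {k : Fin (n + 1)} (hk : k ≠ i)
    (c : Bool) :
    prismMap i (update t (i.castSucc.succAbove k) c) = update (prismMap i t) k c := by
  have hs : update t (i.castSucc.succAbove k) c ∘ i.castSucc.succAbove =
      update (t ∘ i.castSucc.succAbove) k c :=
    update_comp_eq_of_injective _ Fin.succAbove_right_injective _ _
  have hsucc : i.succ ≠ i.castSucc.succAbove k := by
    rw [← Fin.succAbove_castSucc_self]
    exact Fin.succAbove_right_injective.ne hk.symm
  rw [prismMap, prismMap, hs, update_of_ne hsucc, update_of_ne (Fin.ne_succAbove _ _),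
    update_comm hk]

lemma prismMap_reflT_succ {t : Fin (n + 2) → Bool} (ht : t i.castSucc = true) :
    prismMap i (reflT i.succ t) = prismMap i t := by
  rw [reflT, prismMap_update_succ, ht, Bool.not_true, Bool.and_false, prismMap, ht,
    Bool.not_true, Bool.and_false, update_idem]

lemma prismMap_reflT (t : Fin (n + 2) → Bool) (j : Fin (n + 2)) :
    ∃ k c, prismMap i (reflT j t) = update (prismMap i t) k c := by
  rcases eq_or_ne j i.castSucc with rfl | hj
  · exact ⟨i, _, prismMap_update_castSucc i t _⟩
  obtain ⟨k, rfl⟩ := Fin.exists_succAbove_eq hj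
  rcases eq_or_ne k i with rfl | hk
  · rw [Fin.succAbove_castSucc_self]
    exact ⟨k, _, prismMap_update_succ k t _⟩
  · exact ⟨k, _, prismMap_update_succAbove i t hk _⟩

lemma isGraphMap_prismMap : IsGraphMap (Cube (n + 2)) (Cube (n + 1)) (prismMap i) :=
  isGraphMap_cube_of_reflT (prismMap_reflT i)

end Prism

/-- the prism `ρ` witnessing that `σ` and `σ ∘ T_i` are homologous:
`ρ` is a graph map, `f_i^- ρ = σ`, `f_{i+1}^+ ρ = σ ∘ T_i`, the faces `f_i^+ ρ` and
`f_{i+1}^- ρ` are degenerate, and every other face of `ρ` is noninjective. -/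
theorem prism_faces {V : Type*} (G : SimpleGraph V) {n : ℕ}
    (σ : (Fin (n + 1) → Bool) → V) (hσ : IsGraphMap (Cube (n + 1)) G σ)
    (i : Fin (n + 1)) (ρ : (Fin (n + 2) → Bool) → V)
    (hρ : ∀ t, ρ t =
      if t i.castSucc = false then σ (t ∘ i.castSucc.succAbove)
      else σ (Function.update (t ∘ i.castSucc.succAbove) i false)) :
    IsGraphMap (Cube (n + 2)) G ρ ∧
    face i.castSucc false ρ = σ ∧
    face i.succ true ρ = σ ∘ reflT i ∧
    IsDegenerate (face i.castSucc true ρ) ∧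
    IsDegenerate (face i.succ false ρ) ∧
    ∀ j : Fin (n + 2), j ≠ i.castSucc → j ≠ i.succ → ∀ b : Bool,
      ¬ Function.Injective (face j b ρ) := by
  obtain rfl := prism_eq_comp i hρ
  refine ⟨hσ.comp (isGraphMap_prismMap i), ?_, ?_, ?_, ?_, ?_⟩
  · rw [face_comp, face_castSucc_false_prismMap, comp_id]
  · rw [face_comp, face_succ_true_prismMap]
  · rw [face_comp, face_castSucc_true_prismMap]
    exact isDegenerate_comp_update σ i false
  · rw [face_comp, face_succ_false_prismMap]
    exact isDegenerate_comp_update σ i false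
  · intro j hj₀ hj₁ b
    exact not_injective_face_of_reflT_invariant hj₁ hj₀
      (fun t ht => congrArg σ (prismMap_reflT_succ i ht)) b
end

section
/- Let σ and γ be injective graph maps I^n → G with the same image equal to a rigid n-cube Q (an induced subgraph of G isomorphic to I^n), such that for every vertex t of I^n, σ(t) equals γ(t) or σ(t) is adjacent to γ(t) in G. Then either σ = γ, or γ = σ ∘ T_k for some reflection T_k, or γ = σ ∘ T_i ∘ T_{i,j} for some rotation (i.e., σ and γ differ by a reflection or a quarter-turn rotation of I^n). -/
section Reflections

variable {n : ℕ}

@[simp]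
lemma reflT_apply_self (i : Fin n) (t : Fin n → Bool) : reflT i t i = !t i := by
  simp [reflT]

lemma reflT_apply_of_ne {i k : Fin n} (h : k ≠ i) (t : Fin n → Bool) : reflT i t k = t k := by
  simp [reflT, h]

@[simp]
lemma reflT_reflT (i : Fin n) (t : Fin n → Bool) : reflT i (reflT i t) = t := by
  simp [reflT]

lemma reflT_comm (i j : Fin n) (t : Fin n → Bool) :
    reflT i (reflT j t) = reflT j (reflT i t) := by
  rcases eq_or_ne i j with rfl | hij
  · rfl
  funext k
  by_cases hki : k = i <;> by_cases hkj : k = j <;>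
    simp_all [reflT_apply_of_ne, hij.symm]

lemma Cube.adj_reflT (k : Fin n) (t : Fin n → Bool) : (Cube n).Adj t (reflT k t) :=
  ⟨k, by simp, fun j hj => by_contra fun h => hj (reflT_apply_of_ne h t).symm⟩

lemma Cube.exists_eq_reflT_of_adj {s t : Fin n → Bool} (h : (Cube n).Adj s t) :
    ∃ k, t = reflT k s := by
  obtain ⟨k, hk, hu⟩ := h
  refine ⟨k, funext fun j => ?_⟩
  rcases eq_or_ne j k with rfl | hjk
  · rw [reflT_apply_self]
    revert hk; cases s j <;> cases t j <;> simp
  · rw [reflT_apply_of_ne hjk]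
    exact (not_not.mp (mt (hu j) hjk)).symm

lemma Cube.not_adj_of_ne_of_ne {s t : Fin n → Bool} {i j : Fin n} (hij : i ≠ j)
    (hi : s i ≠ t i) (hj : s j ≠ t j) : ¬(Cube n).Adj s t :=
  fun ⟨_, _, hu⟩ => hij ((hu i hi).trans (hu j hj).symm)

lemma reflT_induction {P : (Fin n → Bool) → Prop} (t₀ : Fin n → Bool) (h₀ : P t₀)
    (hstep : ∀ v k, P v → P (reflT k v)) (v : Fin n → Bool) : P v := by
  have key : ∀ s : Finset (Fin n), P fun j => if j ∈ s then !t₀ j else t₀ j := by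
    intro s
    induction s using Finset.induction_on with
    | empty => simpa using h₀
    | insert a s ha ih =>
      convert hstep _ a ih using 1
      funext j
      rcases eq_or_ne j a with rfl | hja
      · simp [ha]
      · simp [reflT_apply_of_ne hja, hja]
  convert key {j | v j ≠ t₀ j} using 1
  funext j
  by_cases h : v j = t₀ j <;> simp_all [Bool.eq_not_iff]

end Reflections

section QuarterTurn

variable {n : ℕ}

/-- The quarter turn `reflT i ∘ swapT i j` moves `v` along coordinate `turnDir i j v`
(`reflT_swapT_eq`); for `i = j` it is the reflection `reflT i`. -/
def turnDir (i j : Fin n) (v : Fin n → Bool) : Fin n :=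
  if v i = v j then i else j

lemma reflT_swapT_eq (i j : Fin n) (v : Fin n → Bool) :
    reflT i (swapT i j v) = reflT (turnDir i j v) v := by
  funext k
  by_cases hki : k = i <;> by_cases hkj : k = j <;> by_cases h : v i = v j <;>
    simp_all [turnDir, swapT, reflT, Function.update_apply, Equiv.swap_apply_of_ne_of_ne,
      Bool.eq_not_iff, eq_comm]

lemma turnDir_eq_or (i j : Fin n) (v : Fin n → Bool) :
    (turnDir i j v = i ∧ turnDir j i v = j) ∨ (turnDir i j v = j ∧ turnDir j i v = i) := by
  by_cases h : v i = v j <;> simp [turnDir, h, eq_comm]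

lemma turnDir_reflT_of_ne {i j k : Fin n} (hi : k ≠ i) (hj : k ≠ j) (v : Fin n → Bool) :
    turnDir i j (reflT k v) = turnDir i j v := by
  simp [turnDir, reflT_apply_of_ne hi.symm, reflT_apply_of_ne hj.symm]

lemma turnDir_reflT_of_mem {i j k : Fin n} (hk : k = i ∨ k = j) (v : Fin n → Bool) :
    turnDir i j (reflT k v) = turnDir j i v := by
  rcases eq_or_ne i j with rfl | hij
  · simp [turnDir]
  by_cases h : v i = v j <;> rcases hk with rfl | rfl <;>
    simp_all [turnDir, reflT_apply_of_ne, hij.symm, eq_comm]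

end QuarterTurn

section SelfMap

variable {n : ℕ} {ψ : (Fin n → Bool) → Fin n → Bool}

lemma eq_id_of_apply_eq_self
    (hadj : ∀ s t, (Cube n).Adj s t → (Cube n).Adj (ψ s) (ψ t))
    (hcl : ∀ t, ψ t = t ∨ (Cube n).Adj t (ψ t)) {t₀ : Fin n → Bool} (h₀ : ψ t₀ = t₀) :
    ψ = id := by
  refine funext (reflT_induction t₀ h₀ fun v k hv => (hcl _).resolve_right fun hk => ?_)
  obtain ⟨l, hl⟩ := Cube.exists_eq_reflT_of_adj hk
  have hadj' := hadj _ _ (Cube.adj_reflT k v)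
  rw [hv, hl] at hadj'
  rcases eq_or_ne l k with rfl | hlk
  · simp at hadj'
  · exact Cube.not_adj_of_ne_of_ne hlk (by simp [reflT_apply_of_ne hlk])
      (by simp [reflT_apply_of_ne hlk.symm]) hadj'

variable {m : (Fin n → Bool) → Fin n}

lemma dir_reflT_eq_of_ne (hadj : ∀ s t, (Cube n).Adj s t → (Cube n).Adj (ψ s) (ψ t))
    (hm : ∀ t, ψ t = reflT (m t) t) {t : Fin n → Bool} {k : Fin n} (h₁ : m t ≠ k)
    (h₂ : m (reflT k t) ≠ k) : m (reflT k t) = m t := by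
  by_contra h₃
  have hadj' := hadj _ _ (Cube.adj_reflT k t)
  rw [hm, hm] at hadj'
  refine Cube.not_adj_of_ne_of_ne h₁ ?_ ?_ hadj'
  · simp [reflT_apply_of_ne (Ne.symm h₃), reflT_apply_of_ne h₁]
  · simp [reflT_apply_of_ne h₁.symm, reflT_apply_of_ne h₂.symm]

lemma dir_reflT_reflT_ne (hinj : Function.Injective ψ) (hm : ∀ t, ψ t = reflT (m t) t)
    {t : Fin n → Bool} {a b : Fin n} (hab : a ≠ b) (ha : m t = a) :
    m (reflT b (reflT a t)) ≠ b := by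
  intro hb
  have h := congrFun (hinj (show ψ (reflT b (reflT a t)) = ψ t by simp [hm, ha, hb])) b
  simp [reflT_apply_of_ne hab.symm] at h

lemma dir_reflT_of_turn (hadj : ∀ s t, (Cube n).Adj s t → (Cube n).Adj (ψ s) (ψ t))
    (hinj : Function.Injective ψ) (hm : ∀ t, ψ t = reflT (m t) t) {v : Fin n → Bool}
    {a b : Fin n} (hab : a ≠ b) (ha : m v = a) (hb : m (reflT a v) = b) :
    m (reflT b v) = b := by
  by_contra h
  refine dir_reflT_reflT_ne hinj hm hab ((dir_reflT_eq_of_ne hadj hm (ha ▸ hab) h).trans ha) ?_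
  rwa [reflT_comm, reflT_reflT]

lemma turn_reflT_of_mem (hadj : ∀ s t, (Cube n).Adj s t → (Cube n).Adj (ψ s) (ψ t))
    (hinj : Function.Injective ψ) (hm : ∀ t, ψ t = reflT (m t) t) {v : Fin n → Bool}
    {a b k : Fin n} (hk : k = a ∨ k = b) (ha : m v = a) (hb : m (reflT a v) = b) :
    m (reflT k v) = b ∧ m (reflT b (reflT k v)) = a := by
  rcases eq_or_ne a b with rfl | hab
  · obtain rfl : k = a := hk.elim id id
    simpa [ha] using hb
  have hb' := dir_reflT_of_turn hadj hinj hm hab ha hb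
  rcases hk with rfl | rfl
  · refine ⟨hb, ?_⟩
    rw [reflT_comm]
    exact dir_reflT_of_turn hadj hinj hm hab.symm hb' (by rwa [reflT_reflT])
  · exact ⟨hb', by rwa [reflT_reflT]⟩

lemma turn_reflT_of_ne (hadj : ∀ s t, (Cube n).Adj s t → (Cube n).Adj (ψ s) (ψ t))
    (hinj : Function.Injective ψ) (hm : ∀ t, ψ t = reflT (m t) t) {v : Fin n → Bool}
    {a b k : Fin n} (hka : k ≠ a) (hkb : k ≠ b) (ha : m v = a) (hb : m (reflT a v) = b) :
    m (reflT k v) = a ∧ m (reflT a (reflT k v)) = b := by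
  have hb' : m (reflT a (reflT k v)) = b := by
    rw [reflT_comm]
    refine (dir_reflT_eq_of_ne hadj hm (hb ▸ hkb.symm) fun h => ?_).trans hb
    exact dir_reflT_reflT_ne hinj hm hka h (by simpa using ha)
  refine ⟨(dir_reflT_eq_of_ne hadj hm (ha ▸ hka.symm) fun h => ?_).trans ha, hb'⟩
  have hba : b = a := by
    by_contra hba
    have h' := dir_reflT_eq_of_ne hadj hm (t := reflT k v) (k := a) (by rwa [h]) (by rwa [hb'])
    exact hkb ((h.symm.trans h'.symm).trans hb')
  exact dir_reflT_reflT_ne hinj hm hka h (by simpa [hba] using hb)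

lemma eq_reflT_comp_swapT_of_turn
    (hadj : ∀ s t, (Cube n).Adj s t → (Cube n).Adj (ψ s) (ψ t))
    (hinj : Function.Injective ψ) (hm : ∀ t, ψ t = reflT (m t) t) {i j : Fin n}
    {v₀ : Fin n → Bool} (h₁ : m v₀ = turnDir i j v₀)
    (h₂ : m (reflT (turnDir i j v₀) v₀) = turnDir j i v₀) :
    ψ = reflT i ∘ swapT i j := by
  have key : ∀ v, m v = turnDir i j v ∧ m (reflT (turnDir i j v) v) = turnDir j i v := by
    refine reflT_induction v₀ ⟨h₁, h₂⟩ fun v k ⟨ha, hb⟩ => ?_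
    by_cases hk : k = i ∨ k = j
    · rw [turnDir_reflT_of_mem hk, turnDir_reflT_of_mem hk.symm]
      refine turn_reflT_of_mem hadj hinj hm ?_ ha hb
      rcases turnDir_eq_or i j v with ⟨hi, hj⟩ | ⟨hi, hj⟩ <;> simp only [hi, hj] <;> tauto
    · push Not at hk
      rw [turnDir_reflT_of_ne hk.1 hk.2, turnDir_reflT_of_ne hk.2 hk.1]
      refine turn_reflT_of_ne hadj hinj hm ?_ ?_ ha hb <;>
        rcases turnDir_eq_or i j v with ⟨hi, hj⟩ | ⟨hi, hj⟩ <;> simp only [hi, hj] <;> tauto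
  funext v
  rw [Function.comp_apply, reflT_swapT_eq, hm, (key v).1]

theorem eq_id_or_eq_reflT_comp_swapT
    (hadj : ∀ s t, (Cube n).Adj s t → (Cube n).Adj (ψ s) (ψ t))
    (hinj : Function.Injective ψ) (hcl : ∀ t, ψ t = t ∨ (Cube n).Adj t (ψ t)) :
    ψ = id ∨ ∃ i j, ψ = reflT i ∘ swapT i j := by
  by_cases hfix : ∃ t, ψ t = t
  · obtain ⟨t₀, h₀⟩ := hfix
    exact Or.inl (eq_id_of_apply_eq_self hadj hcl h₀)
  push Not at hfix
  choose m hm using fun t => Cube.exists_eq_reflT_of_adj ((hcl t).resolve_left (hfix t))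
  right
  let v₀ : Fin n → Bool := fun _ => false
  exact ⟨m v₀, m (reflT (m v₀) v₀), eq_reflT_comp_swapT_of_turn hadj hinj hm (v₀ := v₀)
    (by simp [turnDir, v₀]) (by simp [turnDir, v₀])⟩

end SelfMap

theorem flip_or_rotation_general {V : Type*} (G : SimpleGraph V) {n : ℕ}
    (σ γ : (Fin n → Bool) → V)
    (hγ : IsGraphMap (Cube n) G γ)
    (hσinj : Function.Injective σ) (hγinj : Function.Injective γ)
    (hrange : Set.range σ = Set.range γ)
    (hrigid : ∀ s t, G.Adj (σ s) (σ t) → (Cube n).Adj s t)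
    (hclose : ∀ t, σ t = γ t ∨ G.Adj (σ t) (γ t)) :
    γ = σ ∨ (∃ k, γ = σ ∘ reflT k) ∨
      (∃ i j, i ≠ j ∧ γ = σ ∘ reflT i ∘ swapT i j) := by
  choose ψ hψ using fun t => hrange ▸ Set.mem_range_self (f := γ) t
  obtain rfl : γ = σ ∘ ψ := funext fun t => (hψ t).symm
  have hinj : Function.Injective ψ := hγinj.of_comp
  have hadj : ∀ s t, (Cube n).Adj s t → (Cube n).Adj (ψ s) (ψ t) := fun s t h =>
    (hγ h).elim (hrigid _ _) fun h' => absurd (hγinj h') h.ne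
  have hcl : ∀ t, ψ t = t ∨ (Cube n).Adj t (ψ t) := fun t =>
    (hclose t).imp (fun h => (hσinj h).symm) (hrigid _ _)
  rcases eq_id_or_eq_reflT_comp_swapT hadj hinj hcl with rfl | ⟨i, j, rfl⟩
  · exact Or.inl rfl
  rcases eq_or_ne i j with rfl | hij
  · exact Or.inr (Or.inl ⟨i, by simp [swapT, Function.comp_def]⟩)
  · exact Or.inr (Or.inr ⟨i, j, hij, rfl⟩)

/-- two injective singular cubes with the same rigid image that are
pointwise equal-or-adjacent differ by the identity, a reflection, or a
quarter-turn rotation `T_i ∘ T_{i,j}`. -/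
theorem flip_or_rotation {V : Type*} (G : SimpleGraph V) {n : ℕ}
    (σ γ : (Fin n → Bool) → V)
    (hσ : IsGraphMap (Cube n) G σ) (hγ : IsGraphMap (Cube n) G γ)
    (hσinj : Function.Injective σ) (hγinj : Function.Injective γ)
    (hrange : Set.range σ = Set.range γ)
    (hrigid : ∀ s t, G.Adj (σ s) (σ t) → (Cube n).Adj s t)
    (hclose : ∀ t, σ t = γ t ∨ G.Adj (σ t) (γ t)) :
    γ = σ ∨ (∃ k, γ = σ ∘ reflT k) ∨
      (∃ i j, i ≠ j ∧ γ = σ ∘ reflT i ∘ swapT i j) :=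
  flip_or_rotation_general G σ γ hγ hσinj hγinj hrange hrigid hclose
end

section
/- Let σ : I^{n+1} → G be a singular (n+1)-cube with f_i^- σ = (f_i^+ σ) ∘ T_j T_{j,m} for indices i < j < m (i.e., a pair of opposite i-faces related by a quarter-turn rotation). Then f_i^- f_j^a f_m^b σ = f_i^+ f_j^{-b} f_m^a σ for all signs a, b. -/
/-! Faces commute by the cubical identity `f_i f_j = f_{j-1} f_i` for `i < j`, so both sides are
faces `f_{j-1} f_{m-1}` of the opposite `i`-faces of `σ`. Substituting
`f_i^- σ = (f_i^+ σ) ∘ T_j T_{j,m}`, the rotation sends the values `(a, b)` inserted at the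
coordinates `(j-1, m-1)` to `(!b, a)`. -/

namespace Fin

theorem insertNth_apply_eq_dite {α : Type*} {n : ℕ} (p : Fin (n + 1)) (x : α) (f : Fin n → α)
    (k : Fin (n + 1)) :
    insertNth (α := fun _ => α) p x f k =
      if h : k.val < p.val then f ⟨k, by omega⟩
      else if h' : k.val = p.val then x
      else f ⟨k - 1, by omega⟩ := by
  rcases lt_trichotomy k p with h | rfl | h
  · simp only [insertNth_apply_below h, eq_rec_constant, dif_pos (lt_def.mp h)]
    rfl
  · simp
  · simp only [insertNth_apply_above h, eq_rec_constant, dif_neg (not_lt.mpr (le_def.mp h.le)),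
      dif_neg (val_ne_of_ne h.ne')]
    rfl

theorem insertNth_insertNth_of_lt {α : Type*} {n : ℕ} {i j : ℕ} (hij : i < j) (hj : j < n + 2)
    (x y : α) (t : Fin n → α) :
    insertNth (α := fun _ => α) (⟨j, hj⟩ : Fin (n + 2)) y
        (insertNth (⟨i, by omega⟩ : Fin (n + 1)) x t) =
      insertNth (⟨i, by omega⟩ : Fin (n + 2)) x
        (insertNth (⟨j - 1, by omega⟩ : Fin (n + 1)) y t) := by
  funext ⟨k, hk⟩
  simp only [insertNth_apply_eq_dite]
  split_ifs <;> first | rfl | omega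

end Fin

theorem face_face_of_lt {V : Type*} {n : ℕ} {i j : ℕ} (hij : i < j) (hj : j < n + 2)
    (x y : Bool) (σ : (Fin (n + 2) → Bool) → V) :
    face (⟨i, by omega⟩ : Fin (n + 1)) x (face (⟨j, hj⟩ : Fin (n + 2)) y σ) =
      face (⟨j - 1, by omega⟩ : Fin (n + 1)) y
        (face (⟨i, by omega⟩ : Fin (n + 2)) x σ) := by
  funext t
  exact congrArg σ (Fin.insertNth_insertNth_of_lt hij hj x y t)

theorem reflT_swapT_insertNth_insertNth {n : ℕ} {p q : ℕ} (hpq : p < q) (hq : q < n + 2)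
    (a b : Bool) (t : Fin n → Bool) :
    reflT (⟨p, by omega⟩ : Fin (n + 2)) (swapT ⟨p, by omega⟩ ⟨q, hq⟩
      (Fin.insertNth (⟨q, hq⟩ : Fin (n + 2)) b
        (Fin.insertNth (⟨p, by omega⟩ : Fin (n + 1)) a t))) =
      Fin.insertNth (⟨q, hq⟩ : Fin (n + 2)) a
        (Fin.insertNth (⟨p, by omega⟩ : Fin (n + 1)) (!b) t) := by
  funext ⟨k, hk⟩
  simp only [reflT, swapT, Function.update_apply, Function.comp_apply, Equiv.swap_apply_def,
    Fin.ext_iff, apply_ite (Fin.insertNth _ _ _), Fin.insertNth_apply_eq_dite]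
  split_ifs <;> first | rfl | omega

theorem face_face_comp_reflT_swapT {V : Type*} {n : ℕ} {p q : ℕ} (hpq : p < q) (hq : q < n + 2)
    (a b : Bool) (τ : (Fin (n + 2) → Bool) → V) :
    face (⟨p, by omega⟩ : Fin (n + 1)) a (face (⟨q, hq⟩ : Fin (n + 2)) b
      (τ ∘ fun t => reflT ⟨p, by omega⟩ (swapT ⟨p, by omega⟩ ⟨q, hq⟩ t))) =
      face (⟨p, by omega⟩ : Fin (n + 1)) (!b) (face (⟨q, hq⟩ : Fin (n + 2)) a τ) := by
  funext t
  exact congrArg τ (reflT_swapT_insertNth_insertNth hpq hq a b t)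

/-- if opposite faces of `σ` satisfy `f_i^- σ = (f_i^+ σ) ∘ T_j T_{j,m}`
for `i < j < m` (indices `j-1`, `m-1` in the face), then
`f_i^- f_j^a f_m^b σ = f_i^+ f_j^{-b} f_m^a σ` for all signs `a, b`. -/
theorem codim_three_relation_of_rotation {V : Type*} {n : ℕ}
    (i j m : ℕ) (hij : i < j) (hjm : j < m) (hm : m < n + 3)
    (σ : (Fin (n + 3) → Bool) → V)
    (hrot : face (⟨i, by omega⟩ : Fin (n + 3)) false σ =
      (face (⟨i, by omega⟩ : Fin (n + 3)) true σ) ∘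
        (fun t : Fin (n + 2) → Bool =>
          reflT (⟨j - 1, by omega⟩ : Fin (n + 2))
            (swapT (⟨j - 1, by omega⟩ : Fin (n + 2)) (⟨m - 1, by omega⟩ : Fin (n + 2)) t)))
    (a b : Bool) :
    face (⟨i, by omega⟩ : Fin (n + 1)) false
        (face (⟨j, by omega⟩ : Fin (n + 2)) a (face (⟨m, hm⟩ : Fin (n + 3)) b σ)) =
      face (⟨i, by omega⟩ : Fin (n + 1)) true
        (face (⟨j, by omega⟩ : Fin (n + 2)) (!b) (face (⟨m, hm⟩ : Fin (n + 3)) a σ)) := by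
  have hjm' : j - 1 < m - 1 := by omega
  have hm' : m - 1 < n + 2 := by omega
  rw [face_face_of_lt hij, face_face_of_lt (hij.trans hjm), hrot,
    face_face_comp_reflT_swapT hjm' hm',
    ← face_face_of_lt (hij.trans hjm), ← face_face_of_lt hij]
end

section
/- Let σ : I^{n+1} → G be a singular (n+1)-cube in which two adjacent faces f_i^a σ and f_j^a σ (i < j, same sign a) are both injective with the same image equal to a rigid n-cube Q. If σ = σ ∘ T_{i,j} (which holds when f_i^{-a} f_j^a σ = f_i^a f_j^{-a} σ and Q is rigid), then f_i^a σ = (f_j^a σ) ∘ T_{i,i+1} ∘ T_{i+1,i+2} ∘ ⋯ ∘ T_{j-2,j-1}. -/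
/-- The composite of adjacent transpositions `T_{i,i+1} ∘ T_{i+1,i+2} ∘ ⋯ ∘ T_{j-2,j-1}`
(0-based indices) on the discrete `n`-cube. -/
def adjSwapChain (n : ℕ) (i j : ℕ) : (Fin n → Bool) → (Fin n → Bool) :=
  ((List.range (j - i - 1)).map fun k =>
    if h : i + k + 1 < n then
      swapT (⟨i + k, by omega⟩ : Fin n) ⟨i + k + 1, h⟩
    else id).foldr (· ∘ ·) id

/-!
Since `σ = σ ∘ T_{i,j}`, it suffices to know how `T_{i,j}` acts on the image of the face
inclusion at `i`: transposing the inserted coordinate `i` with coordinate `j` is the same as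
inserting at `j` after moving coordinate `j - 1` of the face to position `i` and shifting
`i, …, j - 2` one step up, which is the chain `T_{i,i+1} ∘ ⋯ ∘ T_{j-2,j-1}`. This is proved
by induction on `j - i`, writing `T_{i,j+1}` as the conjugate of `T_{i,j}` by `T_{j,j+1}`.
-/

lemma List.foldr_comp_eq_comp {α : Type*} (L : List (α → α)) (f : α → α) :
    L.foldr (· ∘ ·) f = L.foldr (· ∘ ·) id ∘ f := by
  induction L with
  | nil => rfl
  | cons g L ih => simp only [List.foldr_cons, ih, Function.comp_assoc]

lemma adjSwapChain_succ_self (n i : ℕ) : adjSwapChain n i (i + 1) = id := by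
  simp [adjSwapChain]

lemma adjSwapChain_add_two (n i d : ℕ) (h : i + d + 1 < n) :
    adjSwapChain n i (i + d + 2) =
      adjSwapChain n i (i + d + 1) ∘ swapT ⟨i + d, by omega⟩ ⟨i + d + 1, h⟩ := by
  simp only [adjSwapChain, show i + d + 2 - i - 1 = d + 1 by omega,
    show i + d + 1 - i - 1 = d by omega, List.range_succ, List.map_append, List.map_cons,
    List.map_nil, List.foldr_append, List.foldr_cons, List.foldr_nil, dif_pos h]
  exact List.foldr_comp_eq_comp _ _

lemma swapT_insertNth_succAbove {n : ℕ} (i : Fin (n + 1)) (p q : Fin n) (x : Bool)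
    (t : Fin n → Bool) :
    swapT (i.succAbove p) (i.succAbove q) (i.insertNth x t) = i.insertNth x (swapT p q t) := by
  funext k
  cases k using Fin.succAboveCases i with
  | x =>
    simp [swapT, Equiv.swap_apply_of_ne_of_ne (Fin.succAbove_ne i p).symm
      (Fin.succAbove_ne i q).symm]
  | p m =>
    simp [swapT, Fin.succAbove_right_injective.swap_apply]

lemma swapT_castSucc_succ_insertNth {n : ℕ} (k : Fin n) (x : Bool) (t : Fin n → Bool) :
    swapT k.castSucc k.succ (k.castSucc.insertNth x t) = k.succ.insertNth x t := by
  refine (Fin.insertNth_eq_iff.2 ⟨?_, ?_⟩).symm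
  · simp [swapT]
  · funext m
    simp only [Fin.removeNth, swapT, Function.comp_apply]
    rcases lt_trichotomy m k with h | rfl | h
    · rw [Fin.succAbove_of_castSucc_lt _ _ (by rw [Fin.lt_def]; simp; omega),
        Equiv.swap_apply_of_ne_of_ne (by simpa using h.ne) (by simp [Fin.ext_iff]; omega),
        ← Fin.succAbove_of_castSucc_lt k.castSucc m (by simpa using h),
        Fin.insertNth_apply_succAbove]
    · rw [Fin.succAbove_succ_self, Equiv.swap_apply_left, ← Fin.succAbove_castSucc_self,
        Fin.insertNth_apply_succAbove]
    · rw [Fin.succAbove_of_le_castSucc _ _ (by rw [Fin.le_def]; simp; omega),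
        Equiv.swap_apply_of_ne_of_ne (by simp [Fin.ext_iff]; omega) (by simpa using h.ne'),
        ← Fin.succAbove_of_le_castSucc k.castSucc m (by simpa using h.le),
        Fin.insertNth_apply_succAbove]

lemma swapT_eq_conj_swapT {n : ℕ} (i j k : Fin n) (hij : i ≠ j) (hik : i ≠ k)
    (t : Fin n → Bool) :
    swapT i k t = swapT j k (swapT i j (swapT j k t)) := by
  have hconj := Equiv.swap_apply_apply (Equiv.swap j k) i j
  rw [Equiv.swap_apply_of_ne_of_ne hij hik, Equiv.swap_apply_left, Equiv.swap_inv] at hconj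
  funext m
  simp only [swapT, Function.comp_apply, hconj, Equiv.Perm.mul_apply]

lemma swapT_insertNth_eq_insertNth_adjSwapChain {n : ℕ} (i j : Fin (n + 1)) (hij : i < j)
    (x : Bool) (t : Fin n → Bool) :
    swapT i j (i.insertNth x t) = j.insertNth x (adjSwapChain n i j t) := by
  obtain ⟨d, hd⟩ := Nat.exists_eq_add_of_lt hij
  have hlt : (i : ℕ) + d + 1 < n + 1 := hd ▸ j.isLt
  obtain rfl : j = ⟨_, hlt⟩ := Fin.ext hd
  clear hij hd
  induction d generalizing t with
  | zero =>
    have base := swapT_castSucc_succ_insertNth ⟨i, by omega⟩ x t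
    simp only [Fin.castSucc_mk, Fin.succ_mk, Fin.eta] at base
    simpa [adjSwapChain_succ_self] using base
  | succ d ih =>
    have hd : (i : ℕ) + d + 1 < n := by omega
    set p : Fin n := ⟨i + d, by omega⟩
    set q : Fin n := ⟨i + d + 1, hd⟩
    have hp : i.succAbove p = q.castSucc :=
      Fin.succAbove_of_le_castSucc _ _ (by rw [Fin.le_def]; simp [p])
    have hq : i.succAbove q = q.succ :=
      Fin.succAbove_of_le_castSucc _ _ (by rw [Fin.le_def]; simp [q]; omega)
    have hiq : i ≠ q.castSucc := by simp [Fin.ext_iff, q]; omega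
    have hiq' : i ≠ q.succ := by simp [Fin.ext_iff, q]; omega
    calc swapT i q.succ (i.insertNth x t)
        = swapT q.castSucc q.succ (swapT i q.castSucc
            (swapT q.castSucc q.succ (i.insertNth x t))) := swapT_eq_conj_swapT _ _ _ hiq hiq' _
      _ = swapT q.castSucc q.succ (swapT i q.castSucc (i.insertNth x (swapT p q t))) := by
        rw [← hp, ← hq, swapT_insertNth_succAbove]
      _ = swapT q.castSucc q.succ
            (q.castSucc.insertNth x (adjSwapChain n i (i + d + 1) (swapT p q t))) :=
        congrArg _ (ih _ _)
      _ = q.succ.insertNth x (adjSwapChain n i (i + d + 1 + 1) t) := by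
        rw [swapT_castSucc_succ_insertNth, adjSwapChain_add_two n i d hd]; rfl

theorem adjacent_faces_same_sign_relation_general {V : Type*} {n : ℕ}
    (σ : (Fin (n + 1) → Bool) → V)
    (i j : Fin (n + 1)) (hij : i < j) (a : Bool)
    (hswap : σ = σ ∘ swapT i j) :
    face i a σ = (face j a σ) ∘ adjSwapChain n i j := by
  funext t
  calc face i a σ t = σ (swapT i j (i.insertNth a t)) := congrFun hswap _
    _ = (face j a σ ∘ adjSwapChain n i j) t := by
      rw [swapT_insertNth_eq_insertNth_adjSwapChain i j hij]; rfl

/-- if the adjacent faces `f_i^a σ` and `f_j^a σ` (`i < j`, same sign)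
are injective with the same rigid image and `σ = σ ∘ T_{i,j}`, then
`f_i^a σ = (f_j^a σ) ∘ T_{i,i+1} ∘ T_{i+1,i+2} ∘ ⋯ ∘ T_{j-2,j-1}`. -/
theorem adjacent_faces_same_sign_relation {V : Type*} (G : SimpleGraph V) {n : ℕ}
    (σ : (Fin (n + 1) → Bool) → V) (hσ : IsGraphMap (Cube (n + 1)) G σ)
    (i j : Fin (n + 1)) (hij : i < j) (a : Bool)
    (hiinj : Function.Injective (face i a σ)) (hjinj : Function.Injective (face j a σ))
    (hrange : Set.range (face i a σ) = Set.range (face j a σ))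
    (hrigid : ∀ s t, G.Adj (face j a σ s) (face j a σ t) → (Cube n).Adj s t)
    (hswap : σ = σ ∘ swapT i j) :
    face i a σ = (face j a σ) ∘ adjSwapChain n i j :=
  adjacent_faces_same_sign_relation_general σ i j hij a hswap
end

section
/- For every 4-cycle Q in the Greene sphere G^sph_n with n ≥ 4, Q is an induced subgraph (rigid 2-cube); moreover Q is monophobic: every singular 3-cube σ : I^3 → G^sph_n having a face supported by Q has at least one additional face supported by Q. -/
/-- `τ` is supported by the cube given by the embedding `φ`: the images of `τ` and
`φ` agree as subgraphs (same vertices and same edges). -/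
def Supports {V : Type*} {n : ℕ} (φ τ : (Fin n → Bool) → V) : Prop :=
  Set.range τ = Set.range φ ∧
    ∀ a b, (Cube n).Adj a b → ∃ s t, (Cube n).Adj s t ∧ τ s = φ a ∧ τ t = φ b

/-- The rigid cube given by the injective embedding `φ` is quasimonophobic in `G`:
every noninjective singular `(n+1)`-cube of `G` with a face supported by it has at
least one additional face supported by it. -/
def IsQuasimonophobicCube {V : Type*} (G : SimpleGraph V) {n : ℕ}
    (φ : (Fin n → Bool) → V) : Prop :=
  ∀ σ : (Fin (n + 1) → Bool) → V, IsGraphMap (Cube (n + 1)) G σ →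
    ¬ Function.Injective σ →
    ∀ i b, Supports φ (face i b σ) →
      ∃ j c, (j, c) ≠ (i, b) ∧ Supports φ (face j c σ)

/-- `G` is `n`-quasimonophobic: every `n`-cube in `G` (image of an injective
singular `n`-cube) is rigid (induced, i.e. the embedding reflects adjacency)
and quasimonophobic. -/
def NQuasimonophobic {V : Type*} (G : SimpleGraph V) (n : ℕ) : Prop :=
  ∀ φ : (Fin n → Bool) → V, IsGraphMap (Cube n) G φ → Function.Injective φ →
    (∀ s t, G.Adj (φ s) (φ t) → (Cube n).Adj s t) ∧ IsQuasimonophobicCube G φ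
def greeneRel (n : ℕ) : (ZMod (2 * n) ⊕ Bool) → (ZMod (2 * n) ⊕ Bool) → Prop
  | .inl a, .inl b => b = a + 1
  | .inl a, .inr c => (a.val % 2 = 1 ∧ c = false) ∨ (a.val % 2 = 0 ∧ c = true)
  | _, _ => False

/-- The Greene sphere `G^sph_n`: a `2n`-cycle on `{0,…,2n-1}` together with a vertex
`u = Sum.inr false` adjacent to all odd vertices and a vertex `v = Sum.inr true`
adjacent to all even vertices. -/
def GreeneSphere (n : ℕ) : SimpleGraph (ZMod (2 * n) ⊕ Bool) where
  Adj x y := x ≠ y ∧ (greeneRel n x y ∨ greeneRel n y x)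
  symm := ⟨fun _ _ ⟨hne, h⟩ => ⟨hne.symm, h.symm⟩⟩
  loopless := ⟨fun _ ⟨hne, _⟩ => hne rfl⟩


/-!
`G^sph_n` is bipartite (colour a cycle vertex by its parity and give each pole the colour opposite
to its neighbours), hence triangle-free, and in a triangle-free graph every injective square is
induced. A 4-cycle cannot stay on the `2n`-cycle, so it passes through a pole and is
`a, a + 1, a + 2, pole`.

The opposite face of a singular 3-cube with a face on such a square is a closed walk running
alongside it. Wrapping the `2n`-cycle onto the 8-cycle of `G^sph_4`, keeping `a, a + 1, a + 2`
apart from everything else, turns the possible walks into a finite check: either the opposite face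
visits the four vertices of the square, or it folds back over one of its edges and the side face
through that edge does. A face with the same image as the square is then supported by it.
-/

open Function Sum

instance (n : ℕ) : DecidableRel (Cube n).Adj := fun x y =>
  inferInstanceAs (Decidable (∃ i, x i ≠ y i ∧ ∀ j, x j ≠ y j → j = i))

theorem cube_adj_insertNth {k : ℕ} (i : Fin (k + 1)) (b : Bool) {s t : Fin k → Bool}
    (h : (Cube k).Adj s t) : (Cube (k + 1)).Adj (i.insertNth b s) (i.insertNth b t) := by
  obtain ⟨j, hj, huniq⟩ := h
  refine ⟨i.succAbove j, by simpa using hj, fun l hl => ?_⟩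
  rcases i.eq_self_or_eq_succAbove l with rfl | ⟨l, rfl⟩
  · simp at hl
  · simp only [Fin.insertNth_apply_succAbove] at hl
    rw [huniq l hl]

theorem cube_adj_insertNth_not {k : ℕ} (i : Fin (k + 1)) (b : Bool) (t : Fin k → Bool) :
    (Cube (k + 1)).Adj (i.insertNth b t) (i.insertNth (!b) t) := by
  refine ⟨i, by simp, fun l hl => ?_⟩
  rcases i.eq_self_or_eq_succAbove l with rfl | ⟨l, rfl⟩
  · rfl
  · simp at hl

theorem cube_two_exists_adj_adj {s t : Fin 2 → Bool} (hst : s ≠ t) (h : ¬ (Cube 2).Adj s t) :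
    ∃ u, (Cube 2).Adj s u ∧ (Cube 2).Adj u t := by
  revert s t
  decide

def squareCorner : Fin 4 → Fin 2 → Bool :=
  ![![false, false], ![true, false], ![true, true], ![false, true]]

theorem squareCorner_adj (m : Fin 4) : (Cube 2).Adj (squareCorner m) (squareCorner (m + 1)) := by
  revert m
  decide

theorem squareCorner_bijective : Bijective squareCorner := by
  decide

theorem exists_side_face (i : Fin 3) (b : Bool) (m : Fin 4) : ∃ j c, (j, c) ≠ (i, b) ∧
    Set.range (fun t : Fin 2 → Bool => (j.insertNth c t : Fin 3 → Bool)) =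
      {i.insertNth b (squareCorner m), i.insertNth b (squareCorner (m + 1)),
        i.insertNth (!b) (squareCorner m), i.insertNth (!b) (squareCorner (m + 1))} := by
  have key : ∀ (i : Fin 3) (b : Bool) (m : Fin 4), ∃ (j : Fin 3) (c : Bool), (j, c) ≠ (i, b) ∧
      Finset.univ.image (fun t : Fin 2 → Bool => (j.insertNth c t : Fin 3 → Bool)) =
        {i.insertNth b (squareCorner m), i.insertNth b (squareCorner (m + 1)),
          i.insertNth (!b) (squareCorner m), i.insertNth (!b) (squareCorner (m + 1))} := by
    decide
  obtain ⟨j, c, hne, h⟩ := key i b m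
  exact ⟨j, c, hne, by simpa using Finset.coe_inj.2 h⟩

theorem Function.Injective.of_range_eq {α β : Type*} [Finite α] {f g : α → β}
    (hg : Injective g) (h : Set.range f = Set.range g) : Injective f := by
  have hf := Set.rangeFactorization_surjective.bijective_of_nat_card_le
    (f := Set.rangeFactorization f) (by rw [h, Nat.card_range_of_injective hg])
  exact Set.rangeFactorization_injective.mp hf.injective

section GraphMap

variable {V W : Type*} {G : SimpleGraph V} {H : SimpleGraph W} {f : V → W}

theorem IsGraphMap.adj_or_eq (hf : IsGraphMap G H f) {u v : V} (h : G.Adj u v ∨ u = v) :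
    H.Adj (f u) (f v) ∨ f u = f v := by
  rcases h with h | rfl
  exacts [hf h, Or.inr rfl]

theorem IsGraphMap.adj_of_injective (hf : IsGraphMap G H f) (hinj : Injective f) {u v : V}
    (h : G.Adj u v) : H.Adj (f u) (f v) :=
  (hf h).resolve_right (hinj.ne h.ne)

theorem IsGraphMap.face {k : ℕ} {σ : (Fin (k + 1) → Bool) → V}
    (hσ : IsGraphMap (Cube (k + 1)) G σ) (i : Fin (k + 1)) (b : Bool) :
    IsGraphMap (Cube k) G (face i b σ) :=
  fun _ _ h => hσ (cube_adj_insertNth i b h)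

theorem IsGraphMap.cube_adj_of_adj (hG : G.CliqueFree 3) {φ : (Fin 2 → Bool) → V}
    (hφ : IsGraphMap (Cube 2) G φ) (hinj : Injective φ) {s t : Fin 2 → Bool}
    (h : G.Adj (φ s) (φ t)) : (Cube 2).Adj s t := by
  classical
  by_contra hst
  obtain ⟨u, hsu, hut⟩ := cube_two_exists_adj_adj (fun e => h.ne (congrArg φ e)) hst
  exact hG {φ s, φ u, φ t} <| SimpleGraph.is3Clique_triple_iff.2
    ⟨hφ.adj_of_injective hinj hsu, h, hφ.adj_of_injective hinj hut⟩

theorem supports_of_range_eq (hG : G.CliqueFree 3) {φ τ : (Fin 2 → Bool) → V}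
    (hφ : IsGraphMap (Cube 2) G φ) (hφi : Injective φ) (hτ : IsGraphMap (Cube 2) G τ)
    (h : Set.range τ = Set.range φ) : Supports φ τ := by
  refine ⟨h, fun a b hab => ?_⟩
  obtain ⟨s, hs⟩ : φ a ∈ Set.range τ := h ▸ Set.mem_range_self a
  obtain ⟨t, ht⟩ : φ b ∈ Set.range τ := h ▸ Set.mem_range_self b
  refine ⟨s, t, hτ.cube_adj_of_adj hG (hφi.of_range_eq h) ?_, hs, ht⟩
  rw [hs, ht]
  exact hφ.adj_of_injective hφi hab

end GraphMap

section FourCycle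

variable {V W : Type*}

def IsFourCycle (G : SimpleGraph V) (P : Fin 4 → V) : Prop :=
  (∀ m, G.Adj (P m) (P (m + 1))) ∧ ∀ m, P m ≠ P (m + 2)

/-- `Q` runs alongside `P` as the opposite face of a singular 3-cube does. -/
def IsAlongside (G : SimpleGraph V) (P Q : Fin 4 → V) : Prop :=
  ∀ m, (G.Adj (Q m) (Q (m + 1)) ∨ Q m = Q (m + 1)) ∧ (G.Adj (P m) (Q m) ∨ P m = Q m)

/-- In the second case `Q` folds back over the edge `P m — P (m + 1)`, so the four values at the
ends of that edge run through all of `P`. -/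
def CoversOrFolds (P Q : Fin 4 → V) : Prop :=
  Set.range Q = Set.range P ∨ ∃ m, Q m = P (m - 1) ∧ Q (m + 1) = P (m + 2)

instance [DecidableEq V] (P Q : Fin 4 → V) : Decidable (CoversOrFolds P Q) :=
  decidable_of_iff (((∀ m, ∃ k, P k = Q m) ∧ ∀ k, ∃ m, Q m = P k) ∨
      ∃ m, Q m = P (m - 1) ∧ Q (m + 1) = P (m + 2)) <| by
    rw [CoversOrFolds, Set.Subset.antisymm_iff, Set.range_subset_iff, Set.range_subset_iff]
    rfl

variable {G : SimpleGraph V} {H : SimpleGraph W} {f : V → W} {P Q : Fin 4 → V}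

theorem isFourCycle_comp_squareCorner {τ : (Fin 2 → Bool) → V} (hτ : IsGraphMap (Cube 2) G τ)
    (hinj : Injective τ) : IsFourCycle G (τ ∘ squareCorner) :=
  ⟨fun m => hτ.adj_of_injective hinj (squareCorner_adj m),
    fun m => (hinj.comp squareCorner_bijective.injective).ne (by revert m; decide)⟩

theorem isAlongside_face {σ : (Fin 3 → Bool) → V} (hσ : IsGraphMap (Cube 3) G σ)
    (i : Fin 3) (b : Bool) :
    IsAlongside G (face i b σ ∘ squareCorner) (face i (!b) σ ∘ squareCorner) :=
  fun m => ⟨hσ.face i (!b) (squareCorner_adj m), hσ (cube_adj_insertNth_not i b _)⟩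

theorem IsFourCycle.comp (hP : IsFourCycle G P) (hf : IsGraphMap G H f)
    (hfib : ∀ m y, f y = f (P m) → y = P m) : IsFourCycle H (f ∘ P) :=
  ⟨fun m => (hf (hP.1 m)).resolve_right fun h => (hP.1 m).ne (hfib _ _ h.symm).symm,
    fun m h => hP.2 m (hfib _ _ h.symm).symm⟩

theorem IsAlongside.comp (hQ : IsAlongside G P Q) (hf : IsGraphMap G H f) :
    IsAlongside H (f ∘ P) (f ∘ Q) :=
  fun m => ⟨hf.adj_or_eq (hQ m).1, hf.adj_or_eq (hQ m).2⟩

theorem CoversOrFolds.of_comp (hfib : ∀ m y, f y = f (P m) → y = P m)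
    (h : CoversOrFolds (f ∘ P) (f ∘ Q)) : CoversOrFolds P Q := by
  rcases h with h | ⟨m, h₁, h₂⟩
  · refine Or.inl (Set.Subset.antisymm ?_ ?_) <;> rintro _ ⟨k, rfl⟩
    · obtain ⟨l, hl⟩ : f (Q k) ∈ Set.range (f ∘ P) := h ▸ Set.mem_range_self k
      exact ⟨l, (hfib _ _ hl.symm).symm⟩
    · obtain ⟨l, hl⟩ : f (P k) ∈ Set.range (f ∘ Q) := h.symm ▸ Set.mem_range_self k
      exact ⟨l, hfib _ _ hl⟩
  · exact Or.inr ⟨m, hfib _ _ h₁, hfib _ _ h₂⟩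

theorem range_eq_of_fin_four (P : Fin 4 → V) (m : Fin 4) :
    Set.range P = {P m, P (m + 1), P (m - 1), P (m + 2)} := by
  ext x
  simp only [Set.mem_range, Set.mem_insert_iff, Set.mem_singleton_iff]
  constructor
  · rintro ⟨k, rfl⟩
    have : k = m ∨ k = m + 1 ∨ k = m - 1 ∨ k = m + 2 := by revert k m; decide
    rcases this with rfl | rfl | rfl | rfl <;> simp
  · rintro (rfl | rfl | rfl | rfl) <;> exact ⟨_, rfl⟩

theorem exists_face_range_eq {σ : (Fin 3 → Bool) → V} {i : Fin 3} {b : Bool}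
    (h : CoversOrFolds (face i b σ ∘ squareCorner) (face i (!b) σ ∘ squareCorner)) :
    ∃ j c, (j, c) ≠ (i, b) ∧ Set.range (face j c σ) = Set.range (face i b σ) := by
  have hrange : ∀ j c, Set.range (face j c σ ∘ squareCorner) = Set.range (face j c σ) :=
    fun j c => squareCorner_bijective.surjective.range_comp _
  rcases h with h | ⟨m, h₁, h₂⟩
  · exact ⟨i, !b, by simp, by rw [← hrange, h, hrange]⟩
  · obtain ⟨j, c, hne, hside⟩ := exists_side_face i b m
    refine ⟨j, c, hne, ?_⟩
    rw [← hrange i b, range_eq_of_fin_four _ m, show face j c σ = σ ∘ _ from rfl,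
      Set.range_comp, hside, ← h₁, ← h₂]
    simp only [Set.image_insert_eq, Set.image_singleton]
    rfl

end FourCycle

namespace GreeneSphere

variable {n : ℕ}

instance : DecidableRel (greeneRel n) := fun x y => by
  cases x <;> cases y <;> unfold greeneRel <;> infer_instance

instance : DecidableRel (GreeneSphere n).Adj := fun x y =>
  inferInstanceAs (Decidable (x ≠ y ∧ _))

/-- `inr (isEven x)` is the pole adjacent to the cycle vertex `x`. -/
def isEven (x : ZMod (2 * n)) : Bool := decide (x.val % 2 = 0)

theorem greeneRel_inl_inr_iff {x : ZMod (2 * n)} {c : Bool} :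
    greeneRel n (inl x) (inr c) ↔ c = isEven x := by
  unfold greeneRel isEven
  rcases Nat.mod_two_eq_zero_or_one x.val with h | h <;> cases c <;> simp [h]

theorem adj_inl_inr_iff {x : ZMod (2 * n)} {c : Bool} :
    (GreeneSphere n).Adj (inl x) (inr c) ↔ c = isEven x :=
  ⟨fun h => h.2.elim greeneRel_inl_inr_iff.1 False.elim,
    fun h => ⟨by simp, Or.inl (greeneRel_inl_inr_iff.2 h)⟩⟩

theorem exists_eq_inl_of_adj_inr {c : Bool} {v : ZMod (2 * n) ⊕ Bool}
    (h : (GreeneSphere n).Adj (inr c) v) : ∃ y, v = inl y ∧ c = isEven y := by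
  rcases v with y | c'
  · exact ⟨y, rfl, adj_inl_inr_iff.1 h.symm⟩
  · exact (h.2.elim id id).elim

def color : ZMod (2 * n) ⊕ Bool → Bool :=
  Sum.elim isEven not

def square (a : ZMod (2 * n)) : Finset (ZMod (2 * n) ⊕ Bool) :=
  {inl a, inl (a + 1), inl (a + 2), inr (isEven a)}

section NeZero

variable [NeZero n]

theorem adj_inl_inl_iff {x y : ZMod (2 * n)} :
    (GreeneSphere n).Adj (inl x) (inl y) ↔ y = x + 1 ∨ x = y + 1 := by
  have h₁ : (1 : ZMod (2 * n)) ≠ 0 := by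
    have : Fact (1 < 2 * n) := ⟨by have := NeZero.pos n; omega⟩
    exact one_ne_zero
  refine ⟨fun h => h.2, fun h => ⟨fun e => ?_, h⟩⟩
  cases e
  rcases h with h | h <;> exact h₁ (by simpa using h.symm)

theorem isEven_add (x y : ZMod (2 * n)) : isEven (x + y) = (isEven x == isEven y) := by
  have : (x + y).val % 2 = (x.val + y.val) % 2 := by
    rw [ZMod.val_add, Nat.mod_mod_of_dvd _ (dvd_mul_right 2 n)]
  rcases Nat.mod_two_eq_zero_or_one x.val with hx | hx <;>
    rcases Nat.mod_two_eq_zero_or_one y.val with hy | hy <;>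
    simp [isEven, this, Nat.add_mod, hx, hy]

theorem isEven_add_one (x : ZMod (2 * n)) : isEven (x + 1) = !isEven x := by
  have : Fact (1 < 2 * n) := ⟨by have := NeZero.pos n; omega⟩
  rw [isEven_add, show isEven (1 : ZMod (2 * n)) = false by simp [isEven, ZMod.val_one]]
  cases isEven x <;> rfl

theorem color_ne_of_greeneRel {u v : ZMod (2 * n) ⊕ Bool} (h : greeneRel n u v) :
    color u ≠ color v := by
  rcases u with x | c <;> rcases v with y | d
  · rw [show y = x + 1 from h]
    simp [color, isEven_add_one]
  · rw [greeneRel_inl_inr_iff.1 h]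
    simp [color]
  all_goals exact h.elim

def coloring : (GreeneSphere n).Coloring Bool :=
  SimpleGraph.Coloring.mk color fun ⟨_, h⟩ =>
    h.elim color_ne_of_greeneRel fun h => (color_ne_of_greeneRel h).symm

theorem cliqueFree_three : (GreeneSphere n).CliqueFree 3 :=
  coloring.colorable.cliqueFree (by simp)

theorem inl_mem_square_of_adj {x y : ZMod (2 * n)} (h : (GreeneSphere n).Adj (inl x) (inl y)) :
    inl y ∈ square (x - 1) ∧ isEven y = isEven (x - 1) := by
  rcases adj_inl_inl_iff.1 h with rfl | rfl
  · rw [show x + 1 = x - 1 + 1 + 1 by ring, isEven_add_one, isEven_add_one, Bool.not_not]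
    simp only [square, Finset.mem_insert, Finset.mem_singleton, inl.injEq, reduceCtorEq, or_false,
      and_true]
    exact Or.inr (Or.inr (by ring))
  · simp [square]

end NeZero

/-- A 4-cycle inside the `2n`-cycle never backtracks, so it winds once around in steps of the same
sign, which forces `2n ∣ 4`. -/
theorem exists_eq_inr_of_isFourCycle (hn : 3 ≤ n) {P : Fin 4 → ZMod (2 * n) ⊕ Bool}
    (hP : IsFourCycle (GreeneSphere n) P) : ∃ k c, P k = inr c := by
  have : NeZero n := ⟨by omega⟩
  by_contra! h
  have : ∀ m, ∃ x, P m = inl x := fun m => by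
    rcases hm : P m with x | c
    exacts [⟨x, rfl⟩, (h m c hm).elim]
  choose x hx using this
  set d : Fin 4 → ZMod (2 * n) := fun m => x (m + 1) - x m
  have hd : ∀ m, d m = 1 ∨ d m = -1 := fun m => by
    have := hP.1 m
    rw [hx, hx, adj_inl_inl_iff] at this
    rcases this with h | h
    · left; simp [d, h]
    · right; simp [d, h]
  have hstep : ∀ m, d (m + 1) = d m := fun m => by
    have hback : d (m + 1) + d m ≠ 0 := fun h => hP.2 m <| by
      rw [hx, hx, show m + 2 = m + 1 + 1 from (add_assoc m 1 1).symm]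
      exact congrArg inl (by linear_combination -h)
    rcases hd m with h | h <;> rcases hd (m + 1) with h' | h' <;> rw [h, h'] at hback ⊢ <;>
      norm_num at hback
  have hsum : d 0 + d 1 + d 2 + d 3 = 0 := by
    simp only [d, Fin.reduceAdd]
    ring
  rw [show d 3 = d 0 from (hstep 2).trans ((hstep 1).trans (hstep 0)),
    show d 2 = d 0 from (hstep 1).trans (hstep 0), show d 1 = d 0 from hstep 0] at hsum
  have h4 : (4 : ZMod (2 * n)) = 0 := by
    rcases hd 0 with h | h <;> rw [h] at hsum
    · linear_combination hsum
    · linear_combination -hsum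
  have := Nat.le_of_dvd (by norm_num) ((ZMod.natCast_eq_zero_iff 4 (2 * n)).1 (by exact_mod_cast h4))
  omega

theorem exists_forall_mem_square (hn : 3 ≤ n) {P : Fin 4 → ZMod (2 * n) ⊕ Bool}
    (hP : IsFourCycle (GreeneSphere n) P) : ∃ a, ∀ m, P m ∈ square a := by
  have : NeZero n := ⟨by omega⟩
  obtain ⟨k, c, hk⟩ := exists_eq_inr_of_isFourCycle hn hP
  have hadj : ∀ m, (GreeneSphere n).Adj (P (k + m)) (P (k + (m + 1))) := fun m => by
    simpa [add_assoc] using hP.1 (k + m)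
  obtain ⟨y, hy, hcy⟩ := exists_eq_inl_of_adj_inr (by simpa [hk] using hadj 0)
  obtain ⟨z, hz, -⟩ := exists_eq_inl_of_adj_inr (by simpa [hk] using (hadj 3).symm)
  obtain ⟨x, hx⟩ : ∃ x, P (k + 2) = inl x := by
    rcases h : P (k + 2) with x | c'
    · exact ⟨x, rfl⟩
    · have := hadj 1
      rw [hy, show (1 : Fin 4) + 1 = 2 from rfl, h, adj_inl_inr_iff] at this
      exact (hP.2 k (by rw [hk, h, this, hcy])).elim
  have hyx := inl_mem_square_of_adj (by simpa [hx, hy] using (hadj 1).symm)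
  have hzx := inl_mem_square_of_adj (by simpa [hx, hz] using hadj 2)
  refine ⟨x - 1, fun m => ?_⟩
  obtain ⟨l, rfl⟩ : ∃ l, m = k + l := ⟨m - k, (add_sub_cancel k m).symm⟩
  fin_cases l
  · simp [hk, hcy, hyx.2, square]
  · simpa [hy] using hyx.1
  · simp [hx, square]
  · simpa [hz] using hzx.1

def foldNat (d : ℕ) : ℕ := if d ≤ 7 then d else 6 + d % 2

theorem foldNat_succ (d : ℕ) :
    foldNat (d + 1) = foldNat d + 1 ∨ foldNat d = foldNat (d + 1) + 1 := by
  unfold foldNat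
  split_ifs <;> omega

theorem foldNat_lt (d : ℕ) : foldNat d < 2 * 4 := by
  unfold foldNat
  split_ifs <;> omega

theorem isEven_foldNat (d : ℕ) : isEven (foldNat d : ZMod (2 * 4)) = decide (d % 2 = 0) := by
  have : foldNat d % 2 = d % 2 := by
    unfold foldNat
    split_ifs <;> omega
  simp [isEven, ZMod.val_natCast, Nat.mod_eq_of_lt (foldNat_lt d), this]

/-- Wraps `G^sph_n` onto `G^sph_4`, sending `a + d` (`0 ≤ d < 2n`) to `foldNat d` and the pole
`inr (isEven a)` to `v`; only `a`, `a + 1`, `a + 2` go to `0`, `1`, `2`. -/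
def fold (a : ZMod (2 * n)) : ZMod (2 * n) ⊕ Bool → ZMod (2 * 4) ⊕ Bool
  | inl x => inl (foldNat (x - a).val)
  | inr c => inr (c == isEven a)

theorem fold_adj_of_greeneRel (hn : 4 ≤ n) (a : ZMod (2 * n)) {u v : ZMod (2 * n) ⊕ Bool}
    (h : greeneRel n u v) : (GreeneSphere 4).Adj (fold a u) (fold a v) := by
  have : NeZero n := ⟨by omega⟩
  have : Fact (1 < 2 * n) := ⟨by omega⟩
  rcases u with x | c <;> rcases v with y | c'
  · obtain rfl : y = x + 1 := h
    have hd := ZMod.val_lt (x - a)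
    simp only [fold, adj_inl_inl_iff]
    rw [show x + 1 - a = x - a + 1 by ring, ZMod.val_add, ZMod.val_one]
    rcases (by omega : (x - a).val + 1 < 2 * n ∨ (x - a).val + 1 = 2 * n) with h | h
    · rw [Nat.mod_eq_of_lt h]
      rcases foldNat_succ (x - a).val with h | h <;> rw [h] <;> push_cast <;> simp
    · have h7 : foldNat (x - a).val = 7 := by unfold foldNat; split_ifs <;> omega
      rw [h, Nat.mod_self, h7]
      left; rfl
  · obtain rfl := greeneRel_inl_inr_iff.1 h
    rw [fold, fold, adj_inl_inr_iff, isEven_foldNat]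
    conv_lhs => rw [show x = x - a + a by ring, isEven_add]
    change _ = isEven (x - a)
    cases isEven (x - a) <;> cases isEven a <;> rfl
  all_goals exact h.elim

theorem isGraphMap_fold (hn : 4 ≤ n) (a : ZMod (2 * n)) :
    IsGraphMap (GreeneSphere n) (GreeneSphere 4) (fold a) := fun _ _ h =>
  Or.inl <| h.2.elim (fold_adj_of_greeneRel hn a) fun h => (fold_adj_of_greeneRel hn a h).symm

theorem fold_inl_add_natCast (hn : 4 ≤ n) (a : ZMod (2 * n)) {k : ℕ} (hk : k ≤ 2) :
    fold a (inl (a + k)) = inl (k : ZMod (2 * 4)) := by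
  simp only [fold, add_sub_cancel_left, ZMod.val_natCast, Nat.mod_eq_of_lt (by omega : k < 2 * n)]
  unfold foldNat
  rw [if_pos (by omega)]

theorem eq_of_fold_eq_inl (hn : 4 ≤ n) (a : ZMod (2 * n)) {k : ℕ} (hk : k ≤ 2)
    {y : ZMod (2 * n) ⊕ Bool} (h : fold a y = fold a (inl (a + k))) : y = inl (a + k) := by
  have : NeZero n := ⟨by omega⟩
  rw [fold_inl_add_natCast hn a hk] at h
  rcases y with z | c
  · have h' : foldNat (z - a).val = k := by
      have := congrArg ZMod.val (inl.inj h)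
      rwa [ZMod.val_natCast, ZMod.val_natCast, Nat.mod_eq_of_lt (foldNat_lt _),
        Nat.mod_eq_of_lt (by omega)] at this
    have hz : z - a = k := by
      rw [← ZMod.natCast_zmod_val (z - a)]
      unfold foldNat at h'
      split_ifs at h' <;> first | omega | rw [h']
    rw [← hz, add_sub_cancel]
  · exact (inl_ne_inr h.symm).elim

theorem eq_of_fold_eq_inr (a : ZMod (2 * n)) {c : Bool} {y : ZMod (2 * n) ⊕ Bool}
    (h : fold a y = fold a (inr c)) : y = inr c := by
  rcases y with z | c'
  · exact (inl_ne_inr h).elim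
  · have := inr.inj h
    cases c <;> cases c' <;> cases isEven a <;> simp_all [fold]

theorem eq_of_fold_eq (hn : 4 ≤ n) {a : ZMod (2 * n)} {x y : ZMod (2 * n) ⊕ Bool}
    (hx : x ∈ square a) (h : fold a y = fold a x) : y = x := by
  simp only [square, Finset.mem_insert, Finset.mem_singleton] at hx
  rcases hx with rfl | rfl | rfl | rfl
  · simpa using eq_of_fold_eq_inl hn a (k := 0) (by norm_num) (by simpa using h)
  · simpa using eq_of_fold_eq_inl hn a (k := 1) (by norm_num) (by simpa using h)
  · simpa using eq_of_fold_eq_inl hn a (k := 2) (by norm_num) (by simpa using h)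
  · exact eq_of_fold_eq_inr a h

theorem fold_mem_square (hn : 4 ≤ n) {a : ZMod (2 * n)} {x : ZMod (2 * n) ⊕ Bool}
    (hx : x ∈ square a) : fold a x ∈ square (0 : ZMod (2 * 4)) := by
  have hcycle : ∀ k ≤ 2, fold a (inl (a + (k : ℕ))) ∈ square (0 : ZMod (2 * 4)) := fun k hk => by
    rw [fold_inl_add_natCast hn a hk]
    interval_cases k <;> decide
  simp only [square, Finset.mem_insert, Finset.mem_singleton] at hx
  rcases hx with rfl | rfl | rfl | rfl
  · simpa using hcycle 0 (by norm_num)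
  · simpa using hcycle 1 (by norm_num)
  · simpa using hcycle 2 (by norm_num)
  · simp only [fold, beq_self_eq_true]
    decide

set_option synthInstance.maxSize 1000 in
theorem coversOrFolds_four {P Q : Fin 4 → ZMod (2 * 4) ⊕ Bool}
    (hP : IsFourCycle (GreeneSphere 4) P) (hPsq : ∀ m, P m ∈ square 0)
    (hQ : IsAlongside (GreeneSphere 4) P Q) : CoversOrFolds P Q := by
  -- Nested quantifiers let `decide` discard a partial choice as soon as it fails.
  have key : ∀ x₀ ∈ square (0 : ZMod (2 * 4)), ∀ x₁ ∈ square (0 : ZMod (2 * 4)),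
      ∀ x₂ ∈ square (0 : ZMod (2 * 4)), ∀ x₃ ∈ square (0 : ZMod (2 * 4)),
      (GreeneSphere 4).Adj x₀ x₁ → (GreeneSphere 4).Adj x₁ x₂ → (GreeneSphere 4).Adj x₂ x₃ →
      (GreeneSphere 4).Adj x₃ x₀ → x₀ ≠ x₂ → x₁ ≠ x₃ →
      ∀ y₀, ((GreeneSphere 4).Adj x₀ y₀ ∨ x₀ = y₀) →
      ∀ y₁, ((GreeneSphere 4).Adj x₁ y₁ ∨ x₁ = y₁) → ((GreeneSphere 4).Adj y₀ y₁ ∨ y₀ = y₁) →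
      ∀ y₂, ((GreeneSphere 4).Adj x₂ y₂ ∨ x₂ = y₂) → ((GreeneSphere 4).Adj y₁ y₂ ∨ y₁ = y₂) →
      ∀ y₃, ((GreeneSphere 4).Adj x₃ y₃ ∨ x₃ = y₃) → ((GreeneSphere 4).Adj y₂ y₃ ∨ y₂ = y₃) →
        ((GreeneSphere 4).Adj y₃ y₀ ∨ y₃ = y₀) →
          CoversOrFolds ![x₀, x₁, x₂, x₃] ![y₀, y₁, y₂, y₃] := by
    decide
  have hP' : P = ![P 0, P 1, P 2, P 3] := by ext m; fin_cases m <;> rfl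
  have hQ' : Q = ![Q 0, Q 1, Q 2, Q 3] := by ext m; fin_cases m <;> rfl
  rw [hP', hQ']
  exact key _ (hPsq 0) _ (hPsq 1) _ (hPsq 2) _ (hPsq 3) (hP.1 0) (hP.1 1) (hP.1 2) (hP.1 3)
    (hP.2 0) (hP.2 1) _ (hQ 0).2 _ (hQ 1).2 (hQ 0).1 _ (hQ 2).2 (hQ 1).1 _ (hQ 3).2 (hQ 2).1
    (hQ 3).1

theorem coversOrFolds_of_isAlongside (hn : 4 ≤ n) {P Q : Fin 4 → ZMod (2 * n) ⊕ Bool}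
    (hP : IsFourCycle (GreeneSphere n) P) (hQ : IsAlongside (GreeneSphere n) P Q) :
    CoversOrFolds P Q := by
  obtain ⟨a, ha⟩ := exists_forall_mem_square (by omega) hP
  have hfib : ∀ m y, fold a y = fold a (P m) → y = P m := fun m _ => eq_of_fold_eq hn (ha m)
  exact .of_comp hfib <| coversOrFolds_four (hP.comp (isGraphMap_fold hn a) hfib)
    (fun m => fold_mem_square hn (ha m)) (hQ.comp (isGraphMap_fold hn a))

end GreeneSphere

/-- for `n ≥ 4`, every 4-cycle in the Greene sphere `G^sph_n` (the
image of an injective singular 2-cube `φ`) is rigid (induced) and monophobic: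
every singular 3-cube with a face supported by it has at least one more face
supported by it. -/
theorem greeneSphere_squares_rigid_monophobic (n : ℕ) (hn : 4 ≤ n)
    (φ : (Fin 2 → Bool) → (ZMod (2 * n) ⊕ Bool))
    (hφ : IsGraphMap (Cube 2) (GreeneSphere n) φ) (hinj : Function.Injective φ) :
    (∀ s t, (GreeneSphere n).Adj (φ s) (φ t) → (Cube 2).Adj s t) ∧
    ∀ σ : (Fin 3 → Bool) → (ZMod (2 * n) ⊕ Bool),
      IsGraphMap (Cube 3) (GreeneSphere n) σ →
      ∀ i b, Supports φ (face i b σ) →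
        ∃ j c, (j, c) ≠ (i, b) ∧ Supports φ (face j c σ) := by
  have : NeZero n := ⟨by omega⟩
  have hG := GreeneSphere.cliqueFree_three (n := n)
  refine ⟨fun s t => hφ.cube_adj_of_adj hG hinj, fun σ hσ i b hsup => ?_⟩
  obtain ⟨j, c, hne, hrange⟩ := exists_face_range_eq <|
    GreeneSphere.coversOrFolds_of_isAlongside hn
      (isFourCycle_comp_squareCorner (hσ.face i b) (hinj.of_range_eq hsup.1))
      (isAlongside_face hσ i b)
  exact ⟨j, c, hne, supports_of_range_eq hG hφ hinj (hσ.face j c) (hrange.trans hsup.1)⟩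
end
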